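/- arXiv:2502.11790 — 6 statements merged into one kernel-verified Lean document; each statement's English description precedes it below -/
import Mathlib

section
/- Let n ≥ 2 and let w be a permutation of {1,…,n+1} that avoids the patterns [4231] and [3412]. Then the map ψ sending a family N = (N_{p,q}) ∈ Gr_{e^w}(M) to the chain (N_{n+1,1}, N_{n+1,2}, …, N_{n+1,n}) is well defined (its values are complete flags in ℂ^{n+1}) and is a bijection from Gr_{e^w}(M) onto the Schubert variety X_w. -/
/-- `r^w_{p,q} = #{k : 1 ≤ k ≤ q, w(k) ≤ p}` for a permutation `w` of `{1, …, n+1}`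
(realised as a permutation of `Fin (n+1)`, with `k ∈ Fin (n+1)` corresponding to the
1-indexed entry `k+1`). The conventions `r^w_{0,q} = r^w_{p,0} = 0` hold automatically. -/
def rnum (n : ℕ) (w : Equiv.Perm (Fin (n+1))) (p q : ℕ) : ℕ :=
  ((Finset.univ : Finset (Fin (n+1))).filter
    (fun k : Fin (n+1) => (k : ℕ) + 1 ≤ q ∧ (w k : ℕ) + 1 ≤ p)).card

/-- The length `ℓ(w)`: the number of inversions of `w`. -/
def pLen (n : ℕ) (w : Equiv.Perm (Fin (n+1))) : ℕ :=
  ((Finset.univ : Finset (Fin (n+1) × Fin (n+1))).filter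
    (fun ij : Fin (n+1) × Fin (n+1) => ij.1 < ij.2 ∧ w ij.2 < w ij.1)).card

/-- The simple transposition `s_i` swapping `i` and `i+1` (1-indexed), as a permutation
of `Fin (n+1)`; it is defined to be the identity for `i` outside `{1, …, n}`. -/
def sT (n : ℕ) (i : ℕ) : Equiv.Perm (Fin (n+1)) :=
  if h : 1 ≤ i ∧ i ≤ n then Equiv.swap ⟨i - 1, by omega⟩ ⟨i, by omega⟩ else 1

/-- The finite set of `w`-relevant pairs `(p,q)`: `1 ≤ p ≤ n+1`, `1 ≤ q ≤ n`,
`r^w_{p,q} < p`, `r^w_{p,q} > r^w_{p-1,q}` and `r^w_{p,q} > r^w_{p,q-1}`. -/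
def relevantFinset (n : ℕ) (w : Equiv.Perm (Fin (n+1))) : Finset (ℕ × ℕ) :=
  ((Finset.Icc 1 (n+1)) ×ˢ (Finset.Icc 1 n)).filter
    (fun pq => rnum n w pq.1 pq.2 < pq.1 ∧
      rnum n w (pq.1 - 1) pq.2 < rnum n w pq.1 pq.2 ∧
      rnum n w pq.1 (pq.2 - 1) < rnum n w pq.1 pq.2)

/-- `L = [i_N, …, i_1]` is a reduced decomposition of `w`: all the letters lie in
`{1, …, n}`, `w = s_{i_N} ∘ ⋯ ∘ s_{i_1}`, and `N = ℓ(w)`. -/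
def IsReducedWord (n : ℕ) (w : Equiv.Perm (Fin (n+1))) (L : List ℕ) : Prop :=
  (∀ i ∈ L, 1 ≤ i ∧ i ≤ n) ∧ (L.map (sT n)).prod = w ∧ L.length = pLen n w

/-- A reduced decomposition `L = [i_N, …, i_1]` of `w` is geometrically compatible if the
multiset of its letters equals the multiset of values `r^w_{p,q}` over the `w`-relevant
pairs `(p,q)`. -/
def IsGeomCompatible (n : ℕ) (w : Equiv.Perm (Fin (n+1))) (L : List ℕ) : Prop :=
  IsReducedWord n w L ∧
    (L : Multiset ℕ) = (relevantFinset n w).val.map (fun pq => rnum n w pq.1 pq.2)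


/-- `F p`: the span of the first `p` standard basis vectors of `ℂ^{n+1}`. -/
noncomputable def Fstd (n p : ℕ) : Submodule ℂ (Fin (n+1) → ℂ) :=
  Submodule.span ℂ ((fun i : Fin (n+1) => (Pi.single i 1 : Fin (n+1) → ℂ)) '' {i | (i : ℕ) < p})

/-- A complete flag `V_1 ⊆ ⋯ ⊆ V_n` in `ℂ^{n+1}`, encoded as a monotone family
`V : Fin n → Submodule ℂ (Fin (n+1) → ℂ)` with `dim V q = q + 1` (0-indexed). -/
def IsCompleteFlag (n : ℕ) (V : Fin n → Submodule ℂ (Fin (n+1) → ℂ)) : Prop :=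
  Monotone V ∧ ∀ q : Fin n, Module.finrank ℂ (V q) = (q : ℕ) + 1

/-- The quiver Grassmannian `Gr_e(M)` of subrepresentations of `M` of dimension vector `e`:
families `N = (N_{p,q})` of subspaces of `ℂ^{n+1}` (indices 0-indexed, so `N p q` is the
subspace at the vertex `(p+1, q+1)`) with `N p q ⊆ F (p+1)`, `N` monotone in both indices
(equivalently, `N p q ⊆ N (p+1) q` and `N p q ⊆ N p (q+1)`), and `dim (N p q) = e p q`. -/
def GrSet (n : ℕ) (e : Fin (n+1) → Fin n → ℕ) :
    Set (Fin (n+1) → Fin n → Submodule ℂ (Fin (n+1) → ℂ)) :=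
  {N | (∀ p q, N p q ≤ Fstd n ((p : ℕ) + 1)) ∧
    (∀ (p p' : Fin (n+1)) (q q' : Fin n), p ≤ p' → q ≤ q' → N p q ≤ N p' q') ∧
    (∀ p q, Module.finrank ℂ (N p q) = e p q)}

/-- `w` avoids the pattern `[4231]`: there are no positions `k1 < k2 < k3 < k4` with
`w(k4) < w(k2) < w(k3) < w(k1)`. -/
def Avoids4231 (n : ℕ) (w : Equiv.Perm (Fin (n+1))) : Prop :=
  ¬ ∃ k1 k2 k3 k4 : Fin (n+1), k1 < k2 ∧ k2 < k3 ∧ k3 < k4 ∧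
    w k4 < w k2 ∧ w k2 < w k3 ∧ w k3 < w k1

/-- `w` avoids the pattern `[3412]`: there are no positions `k1 < k2 < k3 < k4` with
`w(k3) < w(k4) < w(k1) < w(k2)`. -/
def Avoids3412 (n : ℕ) (w : Equiv.Perm (Fin (n+1))) : Prop :=
  ¬ ∃ k1 k2 k3 k4 : Fin (n+1), k1 < k2 ∧ k2 < k3 ∧ k3 < k4 ∧
    w k3 < w k4 ∧ w k4 < w k1 ∧ w k1 < w k2

/-- The dimension vector `e^w`: `e^w_{p,q} = r^w_{p,q}` if `r^w_{p,q} = min(p,q)` or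
`r^w_{p,q} = 0`, and `e^w_{p,q} = max (e^w_{p-1,q}) (e^w_{p,q-1})` if
`0 < r^w_{p,q} < min(p,q)`. -/
def ew (n : ℕ) (w : Equiv.Perm (Fin (n+1))) : ℕ → ℕ → ℕ
  | 0, _ => 0
  | _+1, 0 => 0
  | (p+1), (q+1) =>
    if rnum n w (p+1) (q+1) = min (p+1) (q+1) ∨ rnum n w (p+1) (q+1) = 0 then
      rnum n w (p+1) (q+1)
    else
      max (ew n w p (q+1)) (ew n w (p+1) q)
  termination_by p q => (p, q)

/-- The Schubert variety `X_w`: the set of complete flags `V` with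
`dim (F_p ∩ V_q) ≥ r^w_{p,q}` for all `1 ≤ p ≤ n+1` and `1 ≤ q ≤ n`
(indices of `V` 0-indexed). -/
def SchubertSet (n : ℕ) (w : Equiv.Perm (Fin (n+1))) :
    Set (Fin n → Submodule ℂ (Fin (n+1) → ℂ)) :=
  {V | IsCompleteFlag n V ∧ ∀ (p : Fin (n+1)) (q : Fin n),
    rnum n w ((p : ℕ) + 1) ((q : ℕ) + 1) ≤
      Module.finrank ℂ ↥(Fstd n ((p : ℕ) + 1) ⊓ V q)}

theorem Equiv.Perm.apply_inv_self {α : Type*} (e : Equiv.Perm α) (x : α) : e (e⁻¹ x) = x :=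
  Equiv.apply_symm_apply e x

theorem Equiv.Perm.inv_apply_self {α : Type*} (e : Equiv.Perm α) (x : α) : e⁻¹ (e x) = x :=
  Equiv.symm_apply_apply e x

section
open Finset
namespace SchubHelp

variable {n : ℕ} (w : Equiv.Perm (Fin (n+1)))

lemma rnum_eq (p q : ℕ) : rnum n w p q =
    ((Finset.univ : Finset (Fin (n+1))).filter
      (fun k : Fin (n+1) => (k : ℕ) < q ∧ (w k : ℕ) < p)).card := by
  unfold rnum; simp_rw [Nat.add_one_le_iff]

/-- card of an interval of Fin values -/
lemma card_interval (m a b : ℕ) (hb : b ≤ m) :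
    ((Finset.univ : Finset (Fin m)).filter (fun k : Fin m => a ≤ (k:ℕ) ∧ (k:ℕ) < b)).card
      = b - a := by
  rw [← Nat.card_Ico a b]
  refine Finset.card_bij' (fun (k : Fin m) _ => (k : ℕ))
      (fun (j : ℕ) (hj : j ∈ Finset.Ico a b) => (⟨j, by
        simp only [Finset.mem_Ico] at hj; omega⟩ : Fin m)) ?_ ?_ ?_ ?_
  · intro k hk; simp only [mem_filter] at hk; simp only [Finset.mem_Ico]; omega
  · intro j hj; simp only [mem_filter]
    refine ⟨mem_univ _, ?_⟩
    simp only [Finset.mem_Ico] at hj; simpa using hj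
  · intro k hk; ext; simp
  · intro j hj; simp

lemma card_val_lt (p : ℕ) (hp : p ≤ n+1) :
    ((univ : Finset (Fin (n+1))).filter (fun v : Fin (n+1) => (v:ℕ) < p)).card = p := by
  have h := card_interval (n+1) 0 p hp
  simp only [Nat.zero_le, true_and, Nat.sub_zero] at h
  exact h

lemma card_filter_perm (p : Fin (n+1) → Prop) [DecidablePred p] :
    ((Finset.univ : Finset (Fin (n+1))).filter (fun k => p (w k))).card
      = ((Finset.univ : Finset (Fin (n+1))).filter p).card := by
  refine Finset.card_bij' (fun k _ => w k) (fun v _ => w⁻¹ v) ?_ ?_ ?_ ?_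
  · intro k hk; rw [mem_filter] at hk ⊢; exact ⟨mem_univ _, hk.2⟩
  · intro v hv; rw [mem_filter] at hv ⊢
    exact ⟨mem_univ _, by simpa [Equiv.Perm.apply_inv_self] using hv.2⟩
  · intro k _; simp
  · intro v _; simp

lemma rnum_mono_left {p p' : ℕ} (h : p ≤ p') (q : ℕ) : rnum n w p q ≤ rnum n w p' q := by
  unfold rnum; apply Finset.card_le_card; intro k hk
  simp only [mem_filter] at *; exact ⟨hk.1, hk.2.1, le_trans hk.2.2 h⟩

lemma rnum_mono_right (p : ℕ) {q q' : ℕ} (h : q ≤ q') : rnum n w p q ≤ rnum n w p q' := by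
  unfold rnum; apply Finset.card_le_card; intro k hk
  simp only [mem_filter] at *; exact ⟨hk.1, le_trans hk.2.1 h, hk.2.2⟩

lemma rnum_le_left (p q : ℕ) : rnum n w p q ≤ p := by
  rw [rnum_eq]
  rcases le_total p (n+1) with h | h
  · calc ((univ : Finset (Fin (n+1))).filter
          (fun k : Fin (n+1) => (k:ℕ) < q ∧ (w k : ℕ) < p)).card
        ≤ ((univ : Finset (Fin (n+1))).filter (fun k : Fin (n+1) => (w k : ℕ) < p)).card := by
          apply Finset.card_le_card; intro k hk; simp only [mem_filter] at *; tauto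
      _ = ((univ : Finset (Fin (n+1))).filter (fun v : Fin (n+1) => (v:ℕ) < p)).card :=
          card_filter_perm w (fun v : Fin (n+1) => (v:ℕ) < p)
      _ = p := card_val_lt p h
  · calc ((univ : Finset (Fin (n+1))).filter
          (fun k : Fin (n+1) => (k:ℕ) < q ∧ (w k : ℕ) < p)).card
        ≤ (univ : Finset (Fin (n+1))).card := Finset.card_filter_le _ _
      _ = n+1 := by simp
      _ ≤ p := h

lemma rnum_le_right (p q : ℕ) : rnum n w p q ≤ q := by
  rw [rnum_eq]
  rcases le_total q (n+1) with h | h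
  · calc ((univ : Finset (Fin (n+1))).filter
          (fun k : Fin (n+1) => (k:ℕ) < q ∧ (w k : ℕ) < p)).card
        ≤ ((univ : Finset (Fin (n+1))).filter (fun k : Fin (n+1) => (k:ℕ) < q)).card := by
          apply Finset.card_le_card; intro k hk; simp only [mem_filter] at *; tauto
      _ = q := card_val_lt q h
  · calc ((univ : Finset (Fin (n+1))).filter
          (fun k : Fin (n+1) => (k:ℕ) < q ∧ (w k : ℕ) < p)).card
        ≤ (univ : Finset (Fin (n+1))).card := Finset.card_filter_le _ _
      _ = n+1 := by simp
      _ ≤ q := h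

/-- full row: all values < p sit at positions < q -/
lemma full_row {p q : ℕ} (hp : p ≤ n+1) :
    rnum n w p q = p ↔ ∀ k : Fin (n+1), (w k : ℕ) < p → (k : ℕ) < q := by
  have hcard : ((univ : Finset (Fin (n+1))).filter
      (fun k : Fin (n+1) => (w k : ℕ) < p)).card = p := by
    rw [card_filter_perm w (fun v : Fin (n+1) => (v:ℕ) < p)]; exact card_val_lt p hp
  rw [rnum_eq]
  constructor
  · intro h k hk
    have hsub : (univ.filter (fun k : Fin (n+1) => (k:ℕ) < q ∧ (w k : ℕ) < p)) ⊆
        (univ.filter (fun k : Fin (n+1) => (w k : ℕ) < p)) := by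
      intro x hx; simp only [mem_filter] at *; tauto
    have heq := Finset.eq_of_subset_of_card_le hsub (by rw [hcard, h])
    have hmem : k ∈ univ.filter (fun k : Fin (n+1) => (w k : ℕ) < p) := by
      simp only [mem_filter]; exact ⟨mem_univ _, hk⟩
    rw [← heq] at hmem; simp only [mem_filter] at hmem; exact hmem.2.1
  · intro h
    have heq : (univ.filter (fun k : Fin (n+1) => (k:ℕ) < q ∧ (w k : ℕ) < p)) =
        (univ.filter (fun k : Fin (n+1) => (w k : ℕ) < p)) := by
      apply Finset.Subset.antisymm
      · intro x hx; simp only [mem_filter] at *; tauto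
      · intro x hx; simp only [mem_filter] at *; exact ⟨hx.1, h x hx.2, hx.2⟩
    rw [heq, hcard]

/-- full column: all positions < q carry values < p -/
lemma full_col {p q : ℕ} (hq : q ≤ n+1) :
    rnum n w p q = q ↔ ∀ k : Fin (n+1), (k : ℕ) < q → (w k : ℕ) < p := by
  have hcard : ((univ : Finset (Fin (n+1))).filter
      (fun k : Fin (n+1) => (k:ℕ) < q)).card = q := card_val_lt q hq
  rw [rnum_eq]
  constructor
  · intro h k hk
    have hsub : (univ.filter (fun k : Fin (n+1) => (k:ℕ) < q ∧ (w k : ℕ) < p)) ⊆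
        (univ.filter (fun k : Fin (n+1) => (k:ℕ) < q)) := by
      intro x hx; simp only [mem_filter] at *; tauto
    have heq := Finset.eq_of_subset_of_card_le hsub (by rw [hcard, h])
    have hmem : k ∈ univ.filter (fun k : Fin (n+1) => (k:ℕ) < q) := by
      simp only [mem_filter]; exact ⟨mem_univ _, hk⟩
    rw [← heq] at hmem; simp only [mem_filter] at hmem; exact hmem.2.2
  · intro h
    have heq : (univ.filter (fun k : Fin (n+1) => (k:ℕ) < q ∧ (w k : ℕ) < p)) =
        (univ.filter (fun k : Fin (n+1) => (k:ℕ) < q)) := by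
      apply Finset.Subset.antisymm
      · intro x hx; simp only [mem_filter] at *; tauto
      · intro x hx; simp only [mem_filter] at *; exact ⟨hx.1, hx.2, h x hx.2⟩
    rw [heq, hcard]

lemma rnum_inv (p q : ℕ) : rnum n w⁻¹ p q = rnum n w q p := by
  rw [rnum_eq, rnum_eq]
  refine Finset.card_bij' (fun k _ => w⁻¹ k) (fun v _ => w v) ?_ ?_ ?_ ?_
  · intro k hk; rw [mem_filter] at hk ⊢
    refine ⟨mem_univ _, hk.2.2, ?_⟩
    rw [Equiv.Perm.apply_inv_self]; exact hk.2.1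
  · intro v hv; rw [mem_filter] at hv ⊢
    refine ⟨mem_univ _, hv.2.2, ?_⟩
    rw [Equiv.Perm.inv_apply_self]; exact hv.2.1
  · intro k _; simp
  · intro v _; simp

lemma rnum_top (q : ℕ) (hq : q ≤ n+1) : rnum n w (n+1) q = q :=
  (full_col w hq).2 (fun k _ => (w k).isLt)

end SchubHelp

namespace SchubHelp

variable {n : ℕ} (w : Equiv.Perm (Fin (n+1)))

/-- closed form for the dimension vector -/
def Edim (p q : ℕ) : ℕ :=
  ((Finset.range (min p q + 1)).filter
    (fun m => rnum n w m q = m ∨ rnum n w p m = m)).sup id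

lemma le_Edim {p q m : ℕ} (hm : m ≤ min p q) (hc : rnum n w m q = m ∨ rnum n w p m = m) :
    m ≤ Edim w p q := by
  apply Finset.le_sup (f := id)
  simp only [Finset.mem_filter, Finset.mem_range]
  exact ⟨by omega, hc⟩

lemma Edim_le_min (p q : ℕ) : Edim w p q ≤ min p q := by
  apply Finset.sup_le
  intro m hm
  simp only [Finset.mem_filter, Finset.mem_range] at hm
  simpa using Nat.lt_succ_iff.1 hm.1

lemma Edim_mono_left {p p' : ℕ} (h : p ≤ p') (q : ℕ) : Edim w p q ≤ Edim w p' q := by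
  apply Finset.sup_le
  intro m hm
  simp only [Finset.mem_filter, Finset.mem_range] at hm
  obtain ⟨hm1, hm2⟩ := hm
  apply le_Edim w (m := m) (by omega)
  rcases hm2 with h2 | h2
  · exact Or.inl h2
  · refine Or.inr (le_antisymm (rnum_le_right w _ _) ?_)
    calc m = rnum n w p m := h2.symm
      _ ≤ rnum n w p' m := rnum_mono_left w h m

lemma Edim_mono_right (p : ℕ) {q q' : ℕ} (h : q ≤ q') : Edim w p q ≤ Edim w p q' := by
  apply Finset.sup_le
  intro m hm
  simp only [Finset.mem_filter, Finset.mem_range] at hm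
  obtain ⟨hm1, hm2⟩ := hm
  apply le_Edim w (m := m) (by omega)
  rcases hm2 with h2 | h2
  · refine Or.inl (le_antisymm (rnum_le_left w _ _) ?_)
    calc m = rnum n w m q := h2.symm
      _ ≤ rnum n w m q' := rnum_mono_right w m h
  · exact Or.inr h2

lemma Edim_top {q : ℕ} (hq : q ≤ n+1) : Edim w (n+1) q = q := by
  refine le_antisymm (le_trans (Edim_le_min w _ _) (min_le_right _ _)) ?_
  exact le_Edim w (by omega) (Or.inr (rnum_top w q hq))

lemma ew_eq_Edim : ∀ p q : ℕ, ew n w p q = Edim w p q := by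
  have key : ∀ s p q : ℕ, p + q ≤ s → ew n w p q = Edim w p q := by
    intro s
    induction s with
    | zero =>
      intro p q h
      obtain ⟨rfl, rfl⟩ : p = 0 ∧ q = 0 := by omega
      simp only [ew]
      refine (le_antisymm (le_trans (Edim_le_min w _ _) (by omega)) (Nat.zero_le _)).symm
    | succ s ih =>
      intro p q hpq
      match p, q with
      | 0, q =>
        simp only [ew]
        refine (le_antisymm (le_trans (Edim_le_min w _ _) (by omega)) (Nat.zero_le _)).symm
      | p+1, 0 =>
        simp only [ew]
        refine (le_antisymm (le_trans (Edim_le_min w _ _) (by omega)) (Nat.zero_le _)).symm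
      | p+1, q+1 =>
        rw [ew]
        by_cases h : rnum n w (p+1) (q+1) = min (p+1) (q+1) ∨ rnum n w (p+1) (q+1) = 0
        · rw [if_pos h]
          rcases h with h | h
          · -- rnum = min : Edim = min
            rw [h]
            refine le_antisymm ?_ (Edim_le_min w _ _)
            rcases min_cases (p+1) (q+1) with ⟨hmin, hle⟩ | ⟨hmin, hle⟩
            · rw [hmin] at h ⊢
              exact le_Edim w (by omega) (Or.inl h)
            · rw [hmin] at h ⊢
              exact le_Edim w (by omega) (Or.inr h)
          · -- rnum = 0 : Edim = 0
            rw [h]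
            refine (le_antisymm ?_ (Nat.zero_le _)).symm
            apply Finset.sup_le
            intro m hm
            simp only [Finset.mem_filter, Finset.mem_range] at hm
            obtain ⟨hm1, hm2⟩ := hm
            have hm1' : m ≤ min (p+1) (q+1) := by omega
            rcases hm2 with h2 | h2
            · have : rnum n w m (q+1) ≤ rnum n w (p+1) (q+1) :=
                rnum_mono_left w (by omega) _
              simp only [id]; omega
            · have : rnum n w (p+1) m ≤ rnum n w (p+1) (q+1) :=
                rnum_mono_right w _ (by omega)
              simp only [id]; omega
        · rw [if_neg h]
          push_neg at h
          have hlt : rnum n w (p+1) (q+1) < min (p+1) (q+1) := by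
            rcases lt_or_eq_of_le (le_min (rnum_le_left w _ _) (rnum_le_right w _ _))
              with h' | h'
            · exact h'
            · exact absurd h' h.1
          rw [ih p (q+1) (by omega), ih (p+1) q (by omega)]
          refine le_antisymm (max_le (Edim_mono_left w (by omega) _)
            (Edim_mono_right w _ (by omega))) ?_
          apply Finset.sup_le
          intro m hm
          simp only [Finset.mem_filter, Finset.mem_range] at hm
          obtain ⟨hm1, hm2⟩ := hm
          rcases hm2 with h2 | h2
          · -- F-type cell : m ≤ p
            have hmp : m ≤ p := by
              rcases Nat.lt_or_ge m (p+1) with h' | h'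
              · omega
              · exfalso
                have : m = p + 1 := by omega
                subst this
                rw [h2] at hlt
                omega
            have : m ≤ Edim w p (q+1) := le_Edim w (by omega) (Or.inl h2)
            simp only [id]; omega
          · have hmq : m ≤ q := by
              rcases Nat.lt_or_ge m (q+1) with h' | h'
              · omega
              · exfalso
                have : m = q + 1 := by omega
                subst this
                rw [h2] at hlt
                omega
            have h2' : rnum n w (p+1) m = m := h2
            have : m ≤ Edim w (p+1) q := le_Edim w (by omega) (Or.inr h2')
            simp only [id]; omega
  intro p q; exact key (p+q) p q le_rfl

/-- pigeonhole: a high value in the position window `[Q, Q+P-r]` -/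
lemma exists_high {P Q r : ℕ} (hr : rnum n w P Q = r) (hrP : r < P) (hP : P ≤ n + 1)
    (hPQ : Q + P - r ≤ n) :
    ∃ y : Fin (n+1), Q ≤ (y:ℕ) ∧ (y:ℕ) ≤ Q + P - r ∧ P ≤ (w y : ℕ) := by
  by_contra hcon
  push_neg at hcon
  set I := (Finset.univ : Finset (Fin (n+1))).filter
    (fun k : Fin (n+1) => Q ≤ (k:ℕ) ∧ (k:ℕ) < Q + P - r + 1) with hI
  set J := (Finset.univ : Finset (Fin (n+1))).filter
    (fun k : Fin (n+1) => (w k : ℕ) < P) with hJ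
  set K := (Finset.univ : Finset (Fin (n+1))).filter
    (fun k : Fin (n+1) => (k:ℕ) < Q ∧ (w k : ℕ) < P) with hK
  have hIcard : I.card = P - r + 1 := by
    rw [hI, card_interval (n+1) Q (Q + P - r + 1) (by omega)]; omega
  have hJcard : J.card = P := by
    rw [hJ, card_filter_perm w (fun v : Fin (n+1) => (v:ℕ) < P)]
    exact card_val_lt P hP
  have hKcard : K.card = r := by rw [hK, ← rnum_eq, hr]
  have hKJ : K ⊆ J := by
    intro x hx; rw [Finset.mem_filter] at *; exact ⟨hx.1, hx.2.2⟩
  have hsub : I ⊆ J \ K := by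
    intro x hx
    rw [Finset.mem_sdiff]
    rw [Finset.mem_filter] at hx ⊢
    have hw := hcon x hx.2.1 (by omega)
    refine ⟨⟨hx.1, hw⟩, ?_⟩
    rw [Finset.mem_filter]
    push_neg
    intro _ h'; omega
  have := Finset.card_le_card hsub
  rw [Finset.card_sdiff_of_subset hKJ, hIcard, hJcard, hKcard] at this
  omega

end SchubHelp

namespace SchubHelp

variable {n : ℕ} (w : Equiv.Perm (Fin (n+1)))

theorem key (h4 : Avoids4231 n w) (h3 : Avoids3412 n w) :
    ∀ P Q : ℕ, 1 ≤ P → P ≤ n+1 → 1 ≤ Q → Q ≤ n →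
    (∃ c, P ≤ c ∧ c ≤ n+1 ∧ rnum n w P Q + (c - P) ≤ Edim w c Q) ∨
    (∃ d, Q ≤ d ∧ d ≤ n ∧ rnum n w P Q + (d - Q) ≤ Edim w P d) := by
  have main : ∀ s P Q : ℕ, P + Q ≤ s → 1 ≤ P → P ≤ n+1 → 1 ≤ Q → Q ≤ n →
      (∃ c, P ≤ c ∧ c ≤ n+1 ∧ rnum n w P Q + (c - P) ≤ Edim w c Q) ∨
      (∃ d, Q ≤ d ∧ d ≤ n ∧ rnum n w P Q + (d - Q) ≤ Edim w P d) := by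
    intro s
    induction s with
    | zero => intro P Q h hP1 _ hQ1 _; omega
    | succ s ih =>
      intro P Q hs hP1 hPn hQ1 hQn
      by_contra hG
      push_neg at hG
      obtain ⟨hGc, hGd⟩ := hG
      set r := rnum n w P Q with hr
      have hrP : r ≤ P := by rw [hr]; exact rnum_le_left w P Q
      have hrQ : r ≤ Q := by rw [hr]; exact rnum_le_right w P Q
      have hEPQ := hGc P le_rfl hPn
      have hr1 : 1 ≤ r := by omega
      -- global bound P + Q ≤ n + r
      have hPQr : P + Q ≤ n + r := by
        by_contra hh
        push_neg at hh
        have hc := hGc (n+1) (by omega) le_rfl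
        rw [Edim_top w (by omega)] at hc
        omega
      -- (¬i)
      have ni : ∀ t, r ≤ t → t ≤ Q →
          ∃ k : Fin (n+1), (k:ℕ) < t ∧ P + t - r ≤ (w k : ℕ) := by
        intro t ht1 ht2
        by_contra hcon
        push_neg at hcon
        have hfull : rnum n w (P + t - r) t = t := by
          apply (full_col w (by omega)).2
          intro k hk
          exact hcon k hk
        have hEt : t ≤ Edim w (P + t - r) Q := by
          apply le_Edim w (by omega) (Or.inr hfull)
        rcases le_or_gt (P + t - r) P with hle | hlt
        · have hmono : Edim w (P + t - r) Q ≤ Edim w P Q := Edim_mono_left w hle Q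
          omega
        · have hgc := hGc (P + t - r) (by omega) (by omega)
          omega
      -- (¬ii)
      have nii : ∀ t, r ≤ t → t ≤ P →
          ∃ v : Fin (n+1), (v:ℕ) < t ∧ Q + t - r ≤ (w⁻¹ v : ℕ) := by
        intro t ht1 ht2
        by_contra hcon
        push_neg at hcon
        have hfull : rnum n w t (Q + t - r) = t := by
          apply (full_row w (by omega)).2
          intro k hk
          have := hcon (w k) hk
          rwa [Equiv.Perm.inv_apply_self] at this
        have hEt : t ≤ Edim w P (Q + t - r) := by
          apply le_Edim w (by omega) (Or.inl hfull)
        rcases le_or_gt (Q + t - r) Q with hle | hlt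
        · have hmono : Edim w P (Q + t - r) ≤ Edim w P Q := Edim_mono_right w P hle
          omega
        · have hgd := hGd (Q + t - r) (by omega) (by omega)
          omega
      -- the two marked positions
      set qm : Fin (n+1) := ⟨Q-1, by omega⟩ with hqm
      set pm : Fin (n+1) := ⟨P-1, by omega⟩ with hpm
      by_cases hcore1 : P ≤ (w qm : ℕ)
      · -- reduction in Q
        have hred : rnum n w P (Q-1) = r := by
          rw [hr, rnum_eq, rnum_eq]
          congr 1
          apply Finset.filter_congr
          intro k _
          constructor
          · rintro ⟨h1, h2⟩; exact ⟨by omega, h2⟩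
          · rintro ⟨h1, h2⟩
            refine ⟨?_, h2⟩
            rcases Nat.lt_or_ge (k:ℕ) (Q-1) with h' | h'
            · exact h'
            · exfalso
              have hk : k = qm := by
                apply Fin.ext; rw [hqm]; simp; omega
              rw [hk] at h2; omega
        have hQ1' : 1 ≤ Q - 1 := by
          have : r ≤ Q - 1 := by rw [← hred]; exact rnum_le_right w P (Q-1)
          omega
        rcases ih P (Q-1) (by omega) hP1 hPn hQ1' (by omega) with
          ⟨c, hc1, hc2, hc3⟩ | ⟨d, hd1, hd2, hd3⟩
        · rw [hred] at hc3
          have hmono : Edim w c (Q-1) ≤ Edim w c Q := Edim_mono_right w c (by omega)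
          have := hGc c hc1 hc2
          omega
        · rw [hred] at hd3
          by_cases hdQ : Q ≤ d
          · have := hGd d hdQ hd2
            omega
          · have hdq : d = Q - 1 := by omega
            subst hdq
            have hmono : Edim w P (Q-1) ≤ Edim w P Q := Edim_mono_right w P (by omega)
            omega
      · by_cases hcore2 : Q ≤ (w⁻¹ pm : ℕ)
        · -- reduction in P
          have hred : rnum n w (P-1) Q = r := by
            rw [hr, rnum_eq, rnum_eq]
            congr 1
            apply Finset.filter_congr
            intro k _
            constructor
            · rintro ⟨h1, h2⟩; exact ⟨h1, by omega⟩
            · rintro ⟨h1, h2⟩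
              refine ⟨h1, ?_⟩
              rcases Nat.lt_or_ge (w k : ℕ) (P-1) with h' | h'
              · exact h'
              · exfalso
                have hwk : w k = pm := by
                  apply Fin.ext; rw [hpm]; simp; omega
                have hk : k = w⁻¹ pm := by rw [← hwk, Equiv.Perm.inv_apply_self]
                rw [hk] at h1; omega
          have hP1' : 1 ≤ P - 1 := by
            have : r ≤ P - 1 := by rw [← hred]; exact rnum_le_left w (P-1) Q
            omega
          rcases ih (P-1) Q (by omega) hP1' (by omega) hQ1 hQn with
            ⟨c, hc1, hc2, hc3⟩ | ⟨d, hd1, hd2, hd3⟩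
        
          · rw [hred] at hc3
            by_cases hcP : P ≤ c
            · have := hGc c hcP hc2
              omega
            · have hcp : c = P - 1 := by omega
              subst hcp
              have hmono : Edim w (P-1) Q ≤ Edim w P Q := Edim_mono_left w (by omega) Q
              omega
          · rw [hred] at hd3
            have hmono : Edim w (P-1) d ≤ Edim w P d := Edim_mono_left w (by omega) d
            have := hGd d hd1 hd2
            omega
        · -- CORE case
          push_neg at hcore1 hcore2
          have hrP' : r < P := by
            by_contra hh
            have hrp : r = P := by omega
            obtain ⟨v, hv1, hv2⟩ := nii P (by omega) le_rfl
            have hfull : ∀ k : Fin (n+1), (w k : ℕ) < P → (k : ℕ) < Q :=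
              (full_row w hPn).1 (by rw [← hr, hrp])
            have := hfull (w⁻¹ v) (by rwa [Equiv.Perm.apply_inv_self])
            omega
          have hrQ' : r < Q := by
            by_contra hh
            have hrq : r = Q := by omega
            obtain ⟨k, hk1, hk2⟩ := ni Q (by omega) le_rfl
            have hfull : ∀ k : Fin (n+1), (k : ℕ) < Q → (w k : ℕ) < P :=
              (full_col w (by omega)).1 (by rw [← hr, hrq])
            have := hfull k hk1
            omega
          obtain ⟨k₀, hk₀Q, hk₀v⟩ := ni Q (by omega) le_rfl
          obtain ⟨u₀, hu₀P, hu₀j⟩ := nii P (by omega) le_rfl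
          obtain ⟨y, hyQ, hyB, hyv⟩ := exists_high w hr.symm hrP' hPn (by omega)
          obtain ⟨z, hzP, hzB, hzi⟩ := exists_high (n := n) (w := w⁻¹)
            (P := Q) (Q := P) (r := r) ((rnum_inv w Q P).trans hr.symm) hrQ'
            (by omega) (by omega)
          -- basic value facts
          have hPc₀ : P ≤ (w k₀ : ℕ) := by omega
          have hj₀Q : Q + 1 ≤ (w⁻¹ u₀ : ℕ) := by omega
          have hizQ : Q ≤ ((w⁻¹ z : ℕ)) := hzi
          -- y < j₀
          have hyj : (y:ℕ) < (w⁻¹ u₀ : ℕ) := by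
            have hne : y ≠ w⁻¹ u₀ := by
              intro he
              have : w y = u₀ := by rw [he, Equiv.Perm.apply_inv_self]
              rw [this] at hyv; omega
            have hne' : (y:ℕ) ≠ ((w⁻¹ u₀ : Fin (n+1)) : ℕ) := fun hc => hne (Fin.ext hc)
            omega
          -- z < w k₀
          have hzc₀ : (z:ℕ) < (w k₀ : ℕ) := by
            have hne : z ≠ w k₀ := by
              intro he
              have : w⁻¹ z = k₀ := by rw [he, Equiv.Perm.inv_apply_self]
              rw [this] at hzi; omega
            have hne' : (z:ℕ) ≠ ((w k₀ : Fin (n+1)) : ℕ) := fun hc => hne (Fin.ext hc)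
            omega
          -- k₀ < Q - 1
          have hk₀qm : (k₀:ℕ) < Q - 1 := by
            rcases Nat.lt_or_ge (k₀:ℕ) (Q-1) with h' | h'
            · exact h'
            · exfalso
              have hk : k₀ = qm := by apply Fin.ext; rw [hqm]; simp; omega
              rw [hk] at hPc₀; omega
          -- u₀ < P - 1
          have hu₀pm : (u₀:ℕ) < P - 1 := by
            rcases Nat.lt_or_ge (u₀:ℕ) (P-1) with h' | h'
            · exact h'
            · exfalso
              have hk : u₀ = pm := by apply Fin.ext; rw [hpm]; simp; omega
              rw [hk] at hu₀j; omega
          -- value of w at the inverse points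
          have hwj₀ : (w (w⁻¹ u₀) : ℕ) = (u₀ : ℕ) := by rw [Equiv.Perm.apply_inv_self]
          have hwiz : (w (w⁻¹ z) : ℕ) = (z : ℕ) := by rw [Equiv.Perm.apply_inv_self]
          have hwiP : (w (w⁻¹ pm) : ℕ) = (pm : ℕ) := by rw [Equiv.Perm.apply_inv_self]
          have hpmval : (pm : ℕ) = P - 1 := by rw [hpm]
          have hqmwlt : (w qm : ℕ) < P := hcore1
          -- iz ≠ j₀ : values z ≥ P > u₀
          have hizj₀ : (w⁻¹ z : ℕ) ≠ (w⁻¹ u₀ : ℕ) := by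
            intro he
            have : (w (w⁻¹ z) : ℕ) = (w (w⁻¹ u₀) : ℕ) := by
              congr 1; exact congrArg w (Fin.ext he)
            rw [hwiz, hwj₀] at this; omega
          by_cases c3s : (w⁻¹ pm : ℕ) < (k₀ : ℕ)
          · by_cases c3 : (w qm : ℕ) < (u₀ : ℕ)
            · -- leaf III: 3412 at (iP, k₀, qm, j₀)
              exact h3 ⟨w⁻¹ pm, k₀, qm, w⁻¹ u₀,
                by rw [Fin.lt_def]; omega,
                by rw [Fin.lt_def, hqm]; simp; omega,
                by rw [Fin.lt_def, hqm]; simp only [Fin.val_mk]; omega,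
                by rw [Fin.lt_def, hwj₀]; omega,
                by rw [Fin.lt_def, hwj₀, hwiP]; omega,
                by rw [Fin.lt_def, hwiP]; omega⟩
            · push_neg at c3
              have hc3' : (u₀:ℕ) < (w qm : ℕ) := by
                rcases Nat.lt_or_ge (u₀:ℕ) (w qm : ℕ) with h' | h'
                · exact h'
                · have he : (u₀:ℕ) = (w qm :ℕ) := by omega
                  exfalso
                  have : w⁻¹ u₀ = qm := by
                    have : u₀ = w qm := Fin.ext he
                    rw [this, Equiv.Perm.inv_apply_self]
                  have := congrArg (fun x : Fin (n+1) => (x:ℕ)) this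
                  simp only [hqm, Fin.val_mk] at this
                  omega
              by_cases c2s : (w⁻¹ u₀ : ℕ) < (w⁻¹ z : ℕ)
              · by_cases c2 : (w k₀ : ℕ) < (w y : ℕ)
                · -- leaf II: 3412 at (k₀, y, j₀, iz)
                  exact h3 ⟨k₀, y, w⁻¹ u₀, w⁻¹ z,
                    by rw [Fin.lt_def]; omega,
                    by rw [Fin.lt_def]; omega,
                    by rw [Fin.lt_def]; omega,
                    by rw [Fin.lt_def, hwj₀, hwiz]; omega,
                    by rw [Fin.lt_def, hwiz]; omega,
                    by rw [Fin.lt_def]; omega⟩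
                · push_neg at c2
                  have hc2' : (w y : ℕ) < (w k₀ : ℕ) := by
                    rcases Nat.lt_or_ge (w y:ℕ) (w k₀ : ℕ) with h' | h'
                    · exact h'
                    · exfalso
                      have he : w y = w k₀ := Fin.ext (by omega)
                      have : y = k₀ := w.injective he
                      rw [this] at hyQ; omega
                  -- leaf V: 4231 at (k₀, qm, y, j₀)
                  exact h4 ⟨k₀, qm, y, w⁻¹ u₀,
                    by rw [Fin.lt_def, hqm]; simp; omega,
                    by rw [Fin.lt_def, hqm]; simp; omega,
                    by rw [Fin.lt_def]; omega,
                    by rw [Fin.lt_def, hwj₀]; omega,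
                    by rw [Fin.lt_def]; omega,
                    by rw [Fin.lt_def]; omega⟩
              · push_neg at c2s
                have hc2s' : (w⁻¹ z : ℕ) < (w⁻¹ u₀ : ℕ) := by omega
                -- leaf VI: 4231 at (k₀, qm, iz, j₀)
                exact h4 ⟨k₀, qm, w⁻¹ z, w⁻¹ u₀,
                  by rw [Fin.lt_def, hqm]; simp; omega,
                  by rw [Fin.lt_def, hqm]; simp only [Fin.val_mk]; omega,
                  by rw [Fin.lt_def]; omega,
                  by rw [Fin.lt_def, hwj₀]; omega,
                  by rw [Fin.lt_def, hwiz]; omega,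
                  by rw [Fin.lt_def, hwiz]; omega⟩
          · push_neg at c3s
            have hc3s' : (k₀ : ℕ) < (w⁻¹ pm : ℕ) := by
              rcases Nat.lt_or_ge (k₀:ℕ) (w⁻¹ pm : ℕ) with h' | h'
              · exact h'
              · exfalso
                have he : k₀ = w⁻¹ pm := Fin.ext (by omega)
                have : (w k₀ : ℕ) = (pm : ℕ) := by rw [he, hwiP]
                omega
            by_cases c2 : (w k₀ : ℕ) < (w y : ℕ)
            · by_cases c2s : (w⁻¹ u₀ : ℕ) < (w⁻¹ z : ℕ)
              · -- leaf II
                exact h3 ⟨k₀, y, w⁻¹ u₀, w⁻¹ z,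
                  by rw [Fin.lt_def]; omega,
                  by rw [Fin.lt_def]; omega,
                  by rw [Fin.lt_def]; omega,
                  by rw [Fin.lt_def, hwj₀, hwiz]; omega,
                  by rw [Fin.lt_def, hwiz]; omega,
                  by rw [Fin.lt_def]; omega⟩
              · push_neg at c2s
                have hc2s' : (w⁻¹ z : ℕ) < (w⁻¹ u₀ : ℕ) := by omega
                -- leaf IV: 4231 at (k₀, iP, iz, j₀)
                exact h4 ⟨k₀, w⁻¹ pm, w⁻¹ z, w⁻¹ u₀,
                  by rw [Fin.lt_def]; omega,
                  by rw [Fin.lt_def]; omega,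
                  by rw [Fin.lt_def]; omega,
                  by rw [Fin.lt_def, hwj₀, hwiP]; omega,
                  by rw [Fin.lt_def, hwiP, hwiz]; omega,
                  by rw [Fin.lt_def, hwiz]; omega⟩
            · push_neg at c2
              have hc2' : (w y : ℕ) < (w k₀ : ℕ) := by
                rcases Nat.lt_or_ge (w y:ℕ) (w k₀ : ℕ) with h' | h'
                · exact h'
                · exfalso
                  have he : w y = w k₀ := Fin.ext (by omega)
                  have : y = k₀ := w.injective he
                  rw [this] at hyQ; omega
              -- leaf I: 4231 at (k₀, iP, y, j₀)
              exact h4 ⟨k₀, w⁻¹ pm, y, w⁻¹ u₀,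
                by rw [Fin.lt_def]; omega,
                by rw [Fin.lt_def]; omega,
                by rw [Fin.lt_def]; omega,
                by rw [Fin.lt_def, hwj₀, hwiP]; omega,
                by rw [Fin.lt_def, hwiP]; omega,
                by rw [Fin.lt_def]; omega⟩
  intro P Q hP1 hPn hQ1 hQn
  exact main (P+Q) P Q le_rfl hP1 hPn hQ1 hQn

end SchubHelp

namespace SchubHelp

variable {n : ℕ} (w : Equiv.Perm (Fin (n+1)))

lemma rnum_zero_left (q : ℕ) : rnum n w 0 q = 0 := by
  have := rnum_le_left w 0 q; omega

lemma rnum_zero_right (p : ℕ) : rnum n w p 0 = 0 := by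
  have := rnum_le_right w p 0; omega

lemma avoids3412_inv (h : Avoids3412 n w) : Avoids3412 n w⁻¹ := by
  rintro ⟨k1, k2, k3, k4, h12, h23, h34, ha, hb, hc⟩
  refine h ⟨w⁻¹ k3, w⁻¹ k4, w⁻¹ k1, w⁻¹ k2, ha, hb, hc, ?_, ?_, ?_⟩ <;>
    simp only [Equiv.Perm.apply_inv_self]
  · exact h12
  · exact h23
  · exact h34

/-- extraction for the dominance lemma (the case `B ≤ A`) -/
lemma dom_aux (h3 : Avoids3412 n w) (P Q A B : ℕ) (hP : P ≤ n+1) (hQ : Q ≤ n+1)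
    (hAmin : A ≤ min P Q) (hBmin : B ≤ min P Q)
    (hA : rnum n w A Q = A)
    (hAmax : ∀ m, m ≤ min P Q → rnum n w m Q = m → m ≤ A)
    (hBmax : ∀ m, m ≤ min P Q → rnum n w P m = m → m ≤ B)
    (hBA : B ≤ A)
    (b : ℕ) (hb : b ≤ min P Q) (hbfull : rnum n w P b = b) :
    rnum n w A b = b := by
  by_contra hcon
  have hb1 : 1 ≤ b := by
    by_contra hh
    have : b = 0 := by omega
    subst this
    exact hcon (rnum_zero_right w A)
  have hbB : b ≤ B := hBmax b hb hbfull
  -- witness k : position < b with value ≥ A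
  have hex : ∃ k : Fin (n+1), (k:ℕ) < b ∧ A ≤ (w k:ℕ) := by
    by_contra h
    push_neg at h
    exact hcon ((full_col w (by omega)).2 (fun k hk => h k hk))
  obtain ⟨k, hkb, hkA⟩ := hex
  have hkP : (w k : ℕ) < P := (full_col w (by omega)).1 hbfull k hkb
  have hAP : A < P := by omega
  have hAQ : A < Q := by
    by_contra hh
    push_neg at hh
    have hAeq : A = Q := by omega
    have hA' : rnum n w Q Q = Q := by
      have h2 := hA
      rw [hAeq] at h2
      exact h2
    have := (full_col w (by omega)).1 hA' k (by omega)
    omega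
  -- position of value A is ≥ Q
  have hAf : Q ≤ (w⁻¹ (⟨A, by omega⟩ : Fin (n+1)) : ℕ) := by
    by_contra h
    push_neg at h
    have hfull : rnum n w (A+1) Q = A+1 := by
      apply (full_row w (by omega)).2
      intro v hv
      rcases Nat.lt_or_ge (w v : ℕ) A with h' | h'
      · exact (full_row w (by omega)).1 hA v h'
      · have hvA : w v = (⟨A, by omega⟩ : Fin (n+1)) := Fin.ext (by simp; omega)
        have : v = w⁻¹ (⟨A, by omega⟩ : Fin (n+1)) := by
          rw [← hvA, Equiv.Perm.inv_apply_self]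
        omega
    have := hAmax (A+1) (by omega) hfull
    omega
  -- B < min P Q
  have hBlt : B < min P Q := by
    rcases lt_or_eq_of_le hBmin with h' | h'
    · exact h'
    · exfalso; omega
  -- witness k' : position ≤ B with value ≥ P
  have hk'ex : ∃ k' : Fin (n+1), (k':ℕ) < B+1 ∧ P ≤ (w k':ℕ) := by
    by_contra h
    push_neg at h
    have hfull : rnum n w P (B+1) = B+1 := (full_col w (by omega)).2 (fun k hk => h k hk)
    have := hBmax (B+1) (by omega) hfull
    omega
  obtain ⟨k', hk'B, hk'P⟩ := hk'ex
  have hbk' : b ≤ (k':ℕ) := by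
    by_contra h
    push_neg at h
    have := (full_col w (by omega)).1 hbfull k' h
    omega
  -- counting : a small value strictly between k' and Q
  have hmm : ∃ mm : Fin (n+1), (k':ℕ) < (mm:ℕ) ∧ (mm:ℕ) < Q ∧ (w mm:ℕ) < A := by
    by_contra h
    push_neg at h
    have hS1card : ((Finset.univ : Finset (Fin (n+1))).filter
        (fun v : Fin (n+1) => (w v : ℕ) < A)).card = A := by
      rw [card_filter_perm w (fun v : Fin (n+1) => (v:ℕ) < A)]
      exact card_val_lt A (by omega)
    have hTcard : ((Finset.univ : Finset (Fin (n+1))).filter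
        (fun v : Fin (n+1) => (v:ℕ) < (k':ℕ)+1)).card = (k':ℕ)+1 :=
      card_val_lt _ (by omega)
    have hkk' : k ≠ k' := by
      intro he; rw [he] at hkP; omega
    have hkT : k ∈ (Finset.univ : Finset (Fin (n+1))).filter
        (fun v : Fin (n+1) => (v:ℕ) < (k':ℕ)+1) := by
      rw [Finset.mem_filter]; exact ⟨Finset.mem_univ _, by omega⟩
    have hk'T : k' ∈ ((Finset.univ : Finset (Fin (n+1))).filter
        (fun v : Fin (n+1) => (v:ℕ) < (k':ℕ)+1)).erase k := by
      rw [Finset.mem_erase, Finset.mem_filter]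
      exact ⟨fun he => hkk' he.symm, Finset.mem_univ _, by omega⟩
    have hsub : ((Finset.univ : Finset (Fin (n+1))).filter
        (fun v : Fin (n+1) => (w v : ℕ) < A)) ⊆
        (((Finset.univ : Finset (Fin (n+1))).filter
          (fun v : Fin (n+1) => (v:ℕ) < (k':ℕ)+1)).erase k).erase k' := by
      intro v hv
      rw [Finset.mem_filter] at hv
      have hvQ : (v:ℕ) < Q := (full_row w (by omega)).1 hA v hv.2
      have hvk' : (v:ℕ) ≤ (k':ℕ) := by
        by_contra hh
        push_neg at hh
        have := h v hh hvQ
        omega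
      have hvk : v ≠ k := by
        intro he; rw [he] at hv; omega
      have hvk'2 : v ≠ k' := by
        intro he; rw [he] at hv; omega
      rw [Finset.mem_erase, Finset.mem_erase, Finset.mem_filter]
      exact ⟨hvk'2, hvk, Finset.mem_univ _, by omega⟩
    have hcard := Finset.card_le_card hsub
    rw [hS1card, Finset.card_erase_of_mem hk'T, Finset.card_erase_of_mem hkT, hTcard]
      at hcard
    omega
  obtain ⟨mm, hm1, hm2, hm3⟩ := hmm
  -- w k > A
  have hwkA : A < (w k : ℕ) := by
    rcases lt_or_eq_of_le hkA with h' | h'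
    · exact h'
    · exfalso
      have hk' : w k = (⟨A, by omega⟩ : Fin (n+1)) := Fin.ext (by simp; omega)
      have : k = w⁻¹ (⟨A, by omega⟩ : Fin (n+1)) := by
        rw [← hk', Equiv.Perm.inv_apply_self]
      omega
  -- 3412 pattern at (k, k', mm, w⁻¹ A)
  exact h3 ⟨k, k', mm, w⁻¹ (⟨A, by omega⟩ : Fin (n+1)),
    by rw [Fin.lt_def]; omega,
    by rw [Fin.lt_def]; omega,
    by rw [Fin.lt_def]; omega,
    by rw [Fin.lt_def, Equiv.Perm.apply_inv_self]; simp; omega,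
    by rw [Fin.lt_def, Equiv.Perm.apply_inv_self]; simp; omega,
    by rw [Fin.lt_def]; omega⟩

/-- the dominance theorem -/
theorem dom (h3 : Avoids3412 n w) (P Q : ℕ) (hP : P ≤ n+1) (hQ : Q ≤ n+1) :
    (rnum n w (Edim w P Q) Q = Edim w P Q ∧
      ∀ b, b ≤ min P Q → rnum n w P b = b → rnum n w (Edim w P Q) b = b)
    ∨ (rnum n w P (Edim w P Q) = Edim w P Q ∧
      ∀ a, a ≤ min P Q → rnum n w a Q = a → rnum n w a (Edim w P Q) = a) := by
  have hS1ne : ((Finset.range (min P Q + 1)).filter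
      (fun m => rnum n w m Q = m)).Nonempty :=
    ⟨0, by simp [rnum_zero_left]⟩
  have hS2ne : ((Finset.range (min P Q + 1)).filter
      (fun m => rnum n w P m = m)).Nonempty :=
    ⟨0, by simp [rnum_zero_right]⟩
  set A := ((Finset.range (min P Q + 1)).filter
      (fun m => rnum n w m Q = m)).max' hS1ne with hAdef
  set B := ((Finset.range (min P Q + 1)).filter
      (fun m => rnum n w P m = m)).max' hS2ne with hBdef
  have hAmem := Finset.max'_mem _ hS1ne
  have hBmem := Finset.max'_mem _ hS2ne
  rw [Finset.mem_filter, Finset.mem_range] at hAmem hBmem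
  have hAmin : A ≤ min P Q := by omega
  have hBmin : B ≤ min P Q := by omega
  have hA : rnum n w A Q = A := hAmem.2
  have hB : rnum n w P B = B := hBmem.2
  have hAmax : ∀ m, m ≤ min P Q → rnum n w m Q = m → m ≤ A := by
    intro m hm hfull
    apply Finset.le_max'
    rw [Finset.mem_filter, Finset.mem_range]
    exact ⟨by omega, hfull⟩
  have hBmax : ∀ m, m ≤ min P Q → rnum n w P m = m → m ≤ B := by
    intro m hm hfull
    apply Finset.le_max'
    rw [Finset.mem_filter, Finset.mem_range]
    exact ⟨by omega, hfull⟩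
  have hEmax : Edim w P Q = max A B := by
    apply le_antisymm
    · apply Finset.sup_le
      intro m hm
      rw [Finset.mem_filter, Finset.mem_range] at hm
      rcases hm.2 with h' | h'
      · have := hAmax m (by omega) h'; simp only [id]; omega
      · have := hBmax m (by omega) h'; simp only [id]; omega
    · apply max_le
      · exact le_Edim w hAmin (Or.inl hA)
      · exact le_Edim w hBmin (Or.inr hB)
  rcases le_or_gt B A with hBA | hAB
  · left
    rw [hEmax, max_eq_left hBA]
    refine ⟨hA, ?_⟩
    intro b hble hbfull
    exact dom_aux w h3 P Q A B hP hQ hAmin hBmin hA hAmax hBmax hBA b hble hbfull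
  · right
    rw [hEmax, max_eq_right hAB.le]
    refine ⟨hB, ?_⟩
    intro a hale hafull
    have hres := dom_aux w⁻¹ (avoids3412_inv w h3) Q P B A hQ hP
      (by omega) (by omega)
      (by rw [rnum_inv]; exact hB)
      (fun m hm hf => hBmax m (by omega) (by rwa [rnum_inv] at hf))
      (fun m hm hf => hAmax m (by omega) (by rwa [rnum_inv] at hf))
      hAB.le a (by omega) (by rw [rnum_inv]; exact hafull)
    rwa [rnum_inv] at hres

end SchubHelp

namespace SchubHelp

lemma Fstd_mono {n : ℕ} {p p' : ℕ} (h : p ≤ p') : Fstd n p ≤ Fstd n p' := by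
  apply Submodule.span_mono
  apply Set.image_mono
  intro i hi
  simp only [Set.mem_setOf_eq] at *
  omega

lemma Fstd_zero (n : ℕ) : Fstd n 0 = ⊥ := by
  unfold Fstd
  have : {i : Fin (n+1) | (i:ℕ) < 0} = ∅ := by
    ext i; simp
  rw [this]
  simp

lemma Fstd_finrank (n : ℕ) {p : ℕ} (hp : p ≤ n+1) :
    Module.finrank ℂ (Fstd n p) = p := by
  unfold Fstd
  rw [Set.image_eq_range]
  have hli : LinearIndependent ℂ
      (fun i : ↥{i : Fin (n+1) | (i : ℕ) < p} => (Pi.single (i : Fin (n+1)) 1 : Fin (n+1) → ℂ)) := by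
    have hb := (Pi.basisFun ℂ (Fin (n+1))).linearIndependent
    have := hb.comp (fun i : ↥{i : Fin (n+1) | (i : ℕ) < p} => (i : Fin (n+1)))
      Subtype.val_injective
    convert this using 1
    funext i
    simp [Function.comp, Pi.basisFun_apply]
  rw [finrank_span_eq_card hli]
  have hcard : Fintype.card ↥{i : Fin (n+1) | (i : ℕ) < p} = p := by
    simp only [Set.coe_setOf]
    rw [Fintype.card_subtype]
    exact card_val_lt p hp
  exact hcard

end SchubHelp

namespace SchubHelp

variable {n : ℕ} (w : Equiv.Perm (Fin (n+1)))

/-- the F-generators of the canonical subrepresentation at `(P,Q)` -/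
def genF (P Q : ℕ) : Finset ℕ :=
  (Finset.range (min P Q + 1)).filter (fun a => rnum n w a Q = a)

/-- the V-generators -/
def genV (P Q : ℕ) : Finset (Fin n) :=
  Finset.univ.filter (fun b : Fin n => (b:ℕ)+1 ≤ min P Q ∧ rnum n w P ((b:ℕ)+1) = (b:ℕ)+1)

/-- the canonical subrepresentation attached to a flag `V` -/
noncomputable def Phi (V : Fin n → Submodule ℂ (Fin (n+1) → ℂ)) (P Q : ℕ) :
    Submodule ℂ (Fin (n+1) → ℂ) :=
  (⨆ a ∈ genF w P Q, Fstd n a) ⊔ (⨆ b ∈ genV w P Q, V b)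

variable (V : Fin n → Submodule ℂ (Fin (n+1) → ℂ))

lemma Phi_le {P Q : ℕ} {U : Submodule ℂ (Fin (n+1) → ℂ)}
    (h1 : ∀ a ∈ genF w P Q, Fstd n a ≤ U) (h2 : ∀ b ∈ genV (n := n) w P Q, V b ≤ U) :
    Phi w V P Q ≤ U :=
  sup_le (iSup₂_le h1) (iSup₂_le h2)

lemma le_Phi_F {P Q a : ℕ} (ha : a ∈ genF w P Q) : Fstd n a ≤ Phi w V P Q :=
  le_trans (le_iSup₂_of_le a ha le_rfl) le_sup_left

lemma le_Phi_V {P Q : ℕ} {b : Fin n} (hb : b ∈ genV (n := n) w P Q) :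
    V b ≤ Phi w V P Q :=
  le_trans (le_iSup₂_of_le b hb le_rfl) le_sup_right

lemma mem_genF {P Q a : ℕ} : a ∈ genF w P Q ↔ a ≤ min P Q ∧ rnum n w a Q = a := by
  unfold genF
  rw [Finset.mem_filter, Finset.mem_range]
  constructor
  · rintro ⟨h1, h2⟩; exact ⟨by omega, h2⟩
  · rintro ⟨h1, h2⟩; exact ⟨by omega, h2⟩

lemma mem_genV {P Q : ℕ} {b : Fin n} :
    b ∈ genV (n := n) w P Q ↔ (b:ℕ)+1 ≤ min P Q ∧ rnum n w P ((b:ℕ)+1) = (b:ℕ)+1 := by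
  unfold genV
  rw [Finset.mem_filter]
  simp

lemma genF_le_Edim {P Q a : ℕ} (ha : a ∈ genF w P Q) : a ≤ Edim w P Q := by
  rw [mem_genF] at ha
  exact le_Edim w ha.1 (Or.inl ha.2)

lemma genV_le_Edim {P Q : ℕ} {b : Fin n} (hb : b ∈ genV (n := n) w P Q) :
    (b:ℕ)+1 ≤ Edim w P Q := by
  rw [mem_genV] at hb
  exact le_Edim w hb.1 (Or.inr hb.2)

lemma Phi_mono {P Q P' Q' : ℕ} (hP : P ≤ P') (hQ : Q ≤ Q') :
    Phi w V P Q ≤ Phi w V P' Q' := by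
  apply Phi_le
  · intro a ha
    rw [mem_genF] at ha
    apply le_Phi_F
    rw [mem_genF]
    refine ⟨by omega, le_antisymm (rnum_le_left w _ _) ?_⟩
    calc a = rnum n w a Q := ha.2.symm
      _ ≤ rnum n w a Q' := rnum_mono_right w a hQ
  · intro b hb
    rw [mem_genV] at hb
    apply le_Phi_V
    rw [mem_genV]
    refine ⟨by omega, le_antisymm (rnum_le_right w _ _) ?_⟩
    calc (b:ℕ)+1 = rnum n w P ((b:ℕ)+1) := hb.2.symm
      _ ≤ rnum n w P' ((b:ℕ)+1) := rnum_mono_left w hP _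

end SchubHelp

namespace SchubHelp

variable {n : ℕ} (w : Equiv.Perm (Fin (n+1))) (V : Fin n → Submodule ℂ (Fin (n+1) → ℂ))

lemma incl_FV (hV : V ∈ SchubertSet n w) {a : ℕ} (q : Fin n) (ha : a ≤ n+1)
    (hfull : rnum n w a ((q:ℕ)+1) = a) : Fstd n a ≤ V q := by
  rcases Nat.eq_zero_or_pos a with rfl | hpos
  · rw [Fstd_zero]; exact bot_le
  · obtain ⟨hflag, hSch⟩ := hV
    have hp : rnum n w ((a-1)+1) ((q:ℕ)+1) ≤
        Module.finrank ℂ ↥(Fstd n ((a-1)+1) ⊓ V q) := hSch ⟨a-1, by omega⟩ q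
    have ha1 : a - 1 + 1 = a := by omega
    rw [ha1] at hp
    rw [hfull] at hp
    have heq := Submodule.eq_of_le_of_finrank_le (inf_le_left : Fstd n a ⊓ V q ≤ Fstd n a)
      (by rw [Fstd_finrank n ha]; exact hp)
    exact inf_eq_left.mp heq

lemma incl_VF (hV : V ∈ SchubertSet n w) {P : ℕ} (b : Fin n) (hP1 : 1 ≤ P) (hPn : P ≤ n+1)
    (hfull : rnum n w P ((b:ℕ)+1) = (b:ℕ)+1) : V b ≤ Fstd n P := by
  obtain ⟨hflag, hSch⟩ := hV
  have hp : rnum n w ((P-1)+1) ((b:ℕ)+1) ≤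
      Module.finrank ℂ ↥(Fstd n ((P-1)+1) ⊓ V b) := hSch ⟨P-1, by omega⟩ b
  have hP1' : P - 1 + 1 = P := by omega
  rw [hP1'] at hp
  rw [hfull] at hp
  have heq := Submodule.eq_of_le_of_finrank_le (inf_le_right : Fstd n P ⊓ V b ≤ V b)
    (by rw [hflag.2 b]; exact hp)
  exact inf_eq_right.mp heq

lemma Phi_le_F (hV : V ∈ SchubertSet n w) {P Q : ℕ} (hP1 : 1 ≤ P) (hPn : P ≤ n+1) :
    Phi w V P Q ≤ Fstd n P := by
  apply Phi_le
  · intro a ha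
    rw [mem_genF] at ha
    exact Fstd_mono (by omega)
  · intro b hb
    rw [mem_genV] at hb
    exact incl_VF w V hV b hP1 hPn hb.2

lemma Phi_dim (h3 : Avoids3412 n w) (hV : V ∈ SchubertSet n w) {P Q : ℕ}
    (hP1 : 1 ≤ P) (hPn : P ≤ n+1) (hQ1 : 1 ≤ Q) (hQn : Q ≤ n) :
    Module.finrank ℂ (Phi w V P Q) = Edim w P Q := by
  by_cases hm : Edim w P Q = 0
  · have hbot : Phi w V P Q = ⊥ := by
      refine le_antisymm (Phi_le w V ?_ ?_) bot_le
      · intro a ha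
        have := genF_le_Edim w ha
        have ha0 : a = 0 := by omega
        rw [ha0, Fstd_zero]
      · intro b hb
        have := genV_le_Edim w hb
        omega
    rw [hbot, hm]
    exact finrank_bot ℂ _
  · have hmmin := Edim_le_min w P Q
    have hminP : min P Q ≤ P := min_le_left _ _
    have hminQ : min P Q ≤ Q := min_le_right _ _
    rcases dom w h3 P Q hPn (by omega) with ⟨hfull, hdom⟩ | ⟨hfull, hdom⟩
    · have heq : Phi w V P Q = Fstd n (Edim w P Q) := by
        apply le_antisymm
        · refine Phi_le w V ?_ ?_
          · intro a ha
            exact Fstd_mono (genF_le_Edim w ha)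
          · intro b hb
            rw [mem_genV] at hb
            exact incl_VF w V hV b (by
              have := genV_le_Edim w ((mem_genV w).2 hb); omega)
              (by omega) (hdom ((b:ℕ)+1) hb.1 hb.2)
        · apply le_Phi_F
          rw [mem_genF]
          exact ⟨hmmin, hfull⟩
      rw [heq]
      exact Fstd_finrank n (by omega)
    · have hm1 : 1 ≤ Edim w P Q := by omega
      have hmn : Edim w P Q - 1 < n := by omega
      set mf : Fin n := ⟨Edim w P Q - 1, hmn⟩ with hmf
      have hmfval : (mf : ℕ) + 1 = Edim w P Q := by rw [hmf]; simp; omega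
      have heq : Phi w V P Q = V mf := by
        apply le_antisymm
        · refine Phi_le w V ?_ ?_
          · intro a ha
            rw [mem_genF] at ha
            refine incl_FV w V hV mf (by omega) ?_
            rw [hmfval]
            exact hdom a ha.1 ha.2
          · intro b hb
            have hble := genV_le_Edim w hb
            apply hV.1.1
            rw [Fin.le_def]
            omega
        · apply le_Phi_V
          rw [mem_genV, hmfval]
          exact ⟨by omega, hfull⟩
      rw [heq, hV.1.2 mf, hmfval]

lemma Phi_bottom (hV : V ∈ SchubertSet n w) {Q : ℕ} (hQ1 : 1 ≤ Q) (hQn : Q ≤ n) :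
    Phi w V (n+1) Q = V ⟨Q-1, by omega⟩ := by
  have hqval : ((⟨Q-1, by omega⟩ : Fin n) : ℕ) + 1 = Q := by simp; omega
  apply le_antisymm
  · refine Phi_le w V ?_ ?_
    · intro a ha
      rw [mem_genF] at ha
      refine incl_FV w V hV _ (by omega) ?_
      rw [hqval]
      exact ha.2
    · intro b hb
      rw [mem_genV] at hb
      apply hV.1.1
      rw [Fin.le_def]
      simp
      omega
  · apply le_Phi_V
    rw [mem_genV, hqval]
    constructor
    · omega
    · exact rnum_top w Q (by omega)

end SchubHelp

namespace SchubHelp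

open Module

variable {n : ℕ} (w : Equiv.Perm (Fin (n+1)))

set_option maxHeartbeats 2000000 in
lemma bottom_mem (h4 : Avoids4231 n w) (h3 : Avoids3412 n w)
    {N : Fin (n+1) → Fin n → Submodule ℂ (Fin (n+1) → ℂ)}
    (hN : N ∈ GrSet n (fun p q => ew n w ((p : ℕ) + 1) ((q : ℕ) + 1))) :
    N (Fin.last n) ∈ SchubertSet n w := by
  obtain ⟨hN1, hN2, hN3p⟩ := hN
  have hN3 : ∀ p q, Module.finrank ℂ (N p q) = ew n w ((p:ℕ)+1) ((q:ℕ)+1) := hN3p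
  have hdim : ∀ q : Fin n, Module.finrank ℂ (N (Fin.last n) q) = (q:ℕ)+1 := by
    intro q
    rw [hN3 (Fin.last n) q, Fin.val_last, ew_eq_Edim, Edim_top w (by omega)]
  refine ⟨⟨fun q q' hq => hN2 _ _ _ _ le_rfl hq, hdim⟩, ?_⟩
  intro p q
  have hpn : (p:ℕ) < n+1 := p.isLt
  have hqn : (q:ℕ) < n := q.isLt
  rcases key w h4 h3 ((p:ℕ)+1) ((q:ℕ)+1) (by omega) (by omega) (by omega) (by omega) with
    ⟨c, hc1, hc2, hc3⟩ | ⟨d, hd1, hd2, hd3⟩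
  · have hlt : c - 1 < n + 1 := by omega
    have hXdim : Module.finrank ℂ (N ⟨c-1, hlt⟩ q) = Edim w c ((q:ℕ)+1) := by
      have h := hN3 ⟨c-1, hlt⟩ q
      rw [ew_eq_Edim] at h
      rw [show ((⟨c-1, hlt⟩ : Fin (n+1)):ℕ) = c - 1 from rfl] at h
      rw [show c - 1 + 1 = c by omega] at h
      exact h
    have hXF : N ⟨c-1, hlt⟩ q ≤ Fstd n c := by
      have h := hN1 ⟨c-1, hlt⟩ q
      rw [show ((⟨c-1, hlt⟩ : Fin (n+1)):ℕ) = c - 1 from rfl] at h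
      rw [show c - 1 + 1 = c by omega] at h
      exact h
    have hXV : N ⟨c-1, hlt⟩ q ≤ N (Fin.last n) q :=
      hN2 _ _ _ _ (Fin.le_last _) le_rfl
    have hsum := Submodule.finrank_sup_add_finrank_inf_eq
      (Fstd n ((p:ℕ)+1)) (N ⟨c-1, hlt⟩ q)
    have hsup : Fstd n ((p:ℕ)+1) ⊔ N ⟨c-1, hlt⟩ q ≤ Fstd n c :=
      sup_le (Fstd_mono hc1) hXF
    have hsupr : Module.finrank ℂ ↥(Fstd n ((p:ℕ)+1) ⊔ N ⟨c-1, hlt⟩ q) ≤ c :=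
      le_trans (Submodule.finrank_mono hsup) (le_of_eq (Fstd_finrank n hc2))
    have hPrank : Module.finrank ℂ (Fstd n ((p:ℕ)+1)) = (p:ℕ)+1 :=
      Fstd_finrank n (by omega)
    have hmono2 : Module.finrank ℂ ↥(Fstd n ((p:ℕ)+1) ⊓ N ⟨c-1, hlt⟩ q) ≤
        Module.finrank ℂ ↥(Fstd n ((p:ℕ)+1) ⊓ N (Fin.last n) q) :=
      Submodule.finrank_mono (inf_le_inf_left _ hXV)
    omega
  · have hlt : d - 1 < n := by omega
    have hXdim : Module.finrank ℂ (N p ⟨d-1, hlt⟩) = Edim w ((p:ℕ)+1) d := by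
      have h := hN3 p ⟨d-1, hlt⟩
      rw [ew_eq_Edim] at h
      rw [show ((⟨d-1, hlt⟩ : Fin n):ℕ) = d - 1 from rfl] at h
      rw [show d - 1 + 1 = d by omega] at h
      exact h
    have hXF : N p ⟨d-1, hlt⟩ ≤ Fstd n ((p:ℕ)+1) := hN1 p ⟨d-1, hlt⟩
    have hXVd : N p ⟨d-1, hlt⟩ ≤ N (Fin.last n) ⟨d-1, hlt⟩ :=
      hN2 _ _ _ _ (Fin.le_last _) le_rfl
    have hVqd : N (Fin.last n) q ≤ N (Fin.last n) ⟨d-1, hlt⟩ :=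
      hN2 _ _ _ _ le_rfl (by
        rw [Fin.le_def]
        rw [show ((⟨d-1, hlt⟩ : Fin n):ℕ) = d - 1 from rfl]
        omega)
    have hVq_dim := hdim q
    have hVd_dim : Module.finrank ℂ (N (Fin.last n) ⟨d-1, hlt⟩) = d := by
      have h := hdim ⟨d-1, hlt⟩
      rw [show ((⟨d-1, hlt⟩ : Fin n):ℕ) = d - 1 from rfl] at h
      rw [show d - 1 + 1 = d by omega] at h
      exact h
    have hsum := Submodule.finrank_sup_add_finrank_inf_eq
      (N p ⟨d-1, hlt⟩) (N (Fin.last n) q)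
    have hsup : N p ⟨d-1, hlt⟩ ⊔ N (Fin.last n) q ≤ N (Fin.last n) ⟨d-1, hlt⟩ :=
      sup_le hXVd hVqd
    have hsupr : Module.finrank ℂ ↥(N p ⟨d-1, hlt⟩ ⊔ N (Fin.last n) q) ≤ d :=
      le_trans (Submodule.finrank_mono hsup) (le_of_eq hVd_dim)
    have hmono2 : Module.finrank ℂ ↥(N p ⟨d-1, hlt⟩ ⊓ N (Fin.last n) q) ≤
        Module.finrank ℂ ↥(Fstd n ((p:ℕ)+1) ⊓ N (Fin.last n) q) :=
      Submodule.finrank_mono (inf_le_inf_right _ hXF)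
    omega

set_option maxHeartbeats 2000000 in
lemma canonical (h4 : Avoids4231 n w) (h3 : Avoids3412 n w)
    {N : Fin (n+1) → Fin n → Submodule ℂ (Fin (n+1) → ℂ)}
    (hN : N ∈ GrSet n (fun p q => ew n w ((p : ℕ) + 1) ((q : ℕ) + 1))) :
    ∀ p q, N p q = Phi w (N (Fin.last n)) ((p:ℕ)+1) ((q:ℕ)+1) := by
  have hV := bottom_mem w h4 h3 hN
  obtain ⟨hN1, hN2, hN3p⟩ := hN
  have hN3 : ∀ p q, Module.finrank ℂ (N p q) = ew n w ((p:ℕ)+1) ((q:ℕ)+1) := hN3p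
  intro p q
  have hpn : (p:ℕ) < n+1 := p.isLt
  have hqn : (q:ℕ) < n := q.isLt
  have hle : Phi w (N (Fin.last n)) ((p:ℕ)+1) ((q:ℕ)+1) ≤ N p q := by
    apply Phi_le
    · intro a ha
      rw [mem_genF] at ha
      obtain ⟨ha1, ha2⟩ := ha
      rcases Nat.eq_zero_or_pos a with rfl | hpos
      · rw [Fstd_zero]; exact bot_le
      · have hlt : a - 1 < n + 1 := by omega
        have hXdim : Module.finrank ℂ (N ⟨a-1, hlt⟩ q) = Edim w a ((q:ℕ)+1) := by
          have h := hN3 ⟨a-1, hlt⟩ q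
          rw [ew_eq_Edim] at h
          rw [show ((⟨a-1, hlt⟩ : Fin (n+1)):ℕ) = a - 1 from rfl] at h
          rw [show a - 1 + 1 = a by omega] at h
          exact h
        have hEa : Edim w a ((q:ℕ)+1) = a := by
          refine le_antisymm (le_trans (Edim_le_min w _ _) (min_le_left _ _)) ?_
          exact le_Edim w (le_min le_rfl (by omega)) (Or.inl ha2)
        have hXF : N ⟨a-1, hlt⟩ q ≤ Fstd n a := by
          have h := hN1 ⟨a-1, hlt⟩ q
          rw [show ((⟨a-1, hlt⟩ : Fin (n+1)):ℕ) = a - 1 from rfl] at h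
          rw [show a - 1 + 1 = a by omega] at h
          exact h
        have heq := Submodule.eq_of_le_of_finrank_le hXF
          (by rw [Fstd_finrank n (by omega), hXdim, hEa])
        rw [← heq]
        refine hN2 _ _ _ _ ?_ le_rfl
        rw [Fin.le_def]
        rw [show ((⟨a-1, hlt⟩ : Fin (n+1)):ℕ) = a - 1 from rfl]
        omega
    · intro b hb
      rw [mem_genV] at hb
      obtain ⟨hb1, hb2⟩ := hb
      have hXdim : Module.finrank ℂ (N p b) = Edim w ((p:ℕ)+1) ((b:ℕ)+1) := by
        rw [hN3 p b, ew_eq_Edim]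
      have hEb : Edim w ((p:ℕ)+1) ((b:ℕ)+1) = (b:ℕ)+1 := by
        refine le_antisymm (le_trans (Edim_le_min w _ _) (min_le_right _ _)) ?_
        exact le_Edim w (le_min (by omega) le_rfl) (Or.inr hb2)
      have hXV : N p b ≤ N (Fin.last n) b := hN2 _ _ _ _ (Fin.le_last _) le_rfl
      have hVb : Module.finrank ℂ (N (Fin.last n) b) = (b:ℕ)+1 := hV.1.2 b
      have heq := Submodule.eq_of_le_of_finrank_le hXV
        (by rw [hVb, hXdim, hEb])
      calc N (Fin.last n) b = N p b := heq.symm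
        _ ≤ N p q := hN2 _ _ _ _ le_rfl (by rw [Fin.le_def]; omega)
  have hdims : Module.finrank ℂ (N p q) = Edim w ((p:ℕ)+1) ((q:ℕ)+1) := by
    rw [hN3 p q, ew_eq_Edim]
  have hphidim := Phi_dim w (N (Fin.last n)) h3 hV
    (P := (p:ℕ)+1) (Q := (q:ℕ)+1) (by omega) (by omega) (by omega) (by omega)
  exact (Submodule.eq_of_le_of_finrank_le hle (by rw [hdims, hphidim])).symm

set_option maxHeartbeats 2000000 in
theorem grassmannian_bij_schubert' (h4 : Avoids4231 n w) (h3 : Avoids3412 n w) :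
    Set.BijOn (fun (N : Fin (n+1) → Fin n → Submodule ℂ (Fin (n+1) → ℂ)) => N (Fin.last n))
      (GrSet n (fun p q => ew n w ((p : ℕ) + 1) ((q : ℕ) + 1)))
      (SchubertSet n w) := by
  refine ⟨?_, ?_, ?_⟩
  · intro N hN
    exact bottom_mem w h4 h3 hN
  · intro N hN N' hN' hEq
    simp only at hEq
    funext p q
    rw [canonical w h4 h3 hN p q, canonical w h4 h3 hN' p q, hEq]
  · intro Vf hVf
    refine ⟨fun p q => Phi w Vf ((p:ℕ)+1) ((q:ℕ)+1), ⟨?_, ?_, ?_⟩, ?_⟩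
    · intro p q
      exact Phi_le_F w Vf hVf (by omega) (by have := p.isLt; omega)
    · intro p p' q q' hp hq
      apply Phi_mono
      · rw [Fin.le_def] at hp; omega
      · rw [Fin.le_def] at hq; omega
    · intro p q
      show Module.finrank ℂ (Phi w Vf ((p:ℕ)+1) ((q:ℕ)+1)) = ew n w ((p:ℕ)+1) ((q:ℕ)+1)
      rw [ew_eq_Edim]
      exact Phi_dim w Vf h3 hVf (by omega) (by have := p.isLt; omega) (by omega)
        (by have := q.isLt; omega)
    · show (fun q : Fin n => Phi w Vf ((Fin.last n : ℕ)+1) ((q:ℕ)+1)) = Vf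
      funext q
      have hb := Phi_bottom w Vf hVf (Q := (q:ℕ)+1) (by omega) (by have := q.isLt; omega)
      show Phi w Vf ((Fin.last n : ℕ)+1) ((q:ℕ)+1) = Vf q
      rw [Fin.val_last, hb]
      exact congrArg Vf (Fin.ext (by simp))

end SchubHelp
end

/-- If `w` avoids the patterns `[4231]` and `[3412]`, then the map
`ψ : N ↦ (N_{n+1,1}, …, N_{n+1,n})` (taking the bottom row of the family `N`) is well
defined and a bijection from the quiver Grassmannian `Gr_{e^w}(M)` onto the Schubert
variety `X_w`. -/
theorem grassmannian_bij_schubert (n : ℕ) (hn : 2 ≤ n) (w : Equiv.Perm (Fin (n+1)))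
    (h1 : Avoids4231 n w) (h2 : Avoids3412 n w) :
    Set.BijOn (fun (N : Fin (n+1) → Fin n → Submodule ℂ (Fin (n+1) → ℂ)) => N (Fin.last n))
      (GrSet n (fun p q => ew n w ((p : ℕ) + 1) ((q : ℕ) + 1)))
      (SchubertSet n w) :=
  SchubHelp.grassmannian_bij_schubert' w h1 h2
end

section
/- Every permutation w of {1,…,n+1} admits a geometrically compatible reduced decomposition; that is, there exists a tuple (i_N,…,i_1) with entries in {1,…,n} such that w = s_{i_N}∘⋯∘s_{i_1}, N = ℓ(w), and the multiset {i_N,…,i_1} equals the multiset of values {r^w_{p,q} : (p,q) w-relevant}. -/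
namespace GeomAux


variable (n : ℕ) (w : Equiv.Perm (Fin (n+1)))

lemma rnum_mono (p : ℕ) {q1 q2 : ℕ} (h : q1 ≤ q2) : rnum n w p q1 ≤ rnum n w p q2 := by
  apply Finset.card_le_card
  intro k hk
  simp only [Finset.mem_filter, Finset.mem_univ, true_and] at *
  exact ⟨hk.1.trans h, hk.2⟩

lemma rnum_le (p q : ℕ) : rnum n w p q ≤ p := by
  classical
  calc rnum n w p q
      ≤ ((Finset.univ : Finset (Fin (n+1))).filter (fun k => (w k : ℕ) + 1 ≤ p)).card := by
        apply Finset.card_le_card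
        intro k hk
        simp only [Finset.mem_filter, Finset.mem_univ, true_and] at *
        exact hk.2
    _ ≤ (Finset.range p).card := by
        apply Finset.card_le_card_of_injOn (fun k => (w k : ℕ))
        · intro k hk
          simp only [Finset.mem_coe, Finset.mem_filter, Finset.mem_univ, true_and] at hk
          simp only [Finset.mem_coe, Finset.mem_range]
          omega
        · intro a _ b _ hab
          exact w.injective (Fin.ext hab)
    _ = p := Finset.card_range p

lemma rnum_q_zero (p : ℕ) : rnum n w p 0 = 0 := by
  simp [rnum]

lemma rnum_succ_q (p q : ℕ) (hq : q ≤ n) :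
    rnum n w p (q+1) = rnum n w p q + (if (w ⟨q, by omega⟩ : ℕ) + 1 ≤ p then 1 else 0) := by
  classical
  unfold rnum
  have hsub : ((Finset.univ : Finset (Fin (n+1))).filter
        (fun k : Fin (n+1) => (k : ℕ) + 1 ≤ q ∧ (w k : ℕ) + 1 ≤ p)) ⊆
      ((Finset.univ : Finset (Fin (n+1))).filter
        (fun k : Fin (n+1) => (k : ℕ) + 1 ≤ q + 1 ∧ (w k : ℕ) + 1 ≤ p)) := by
    intro k hk
    simp only [Finset.mem_filter, Finset.mem_univ, true_and] at *
    omega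
  rw [← Finset.card_sdiff_add_card_eq_card hsub]
  have hd : ((Finset.univ : Finset (Fin (n+1))).filter
        (fun k : Fin (n+1) => (k : ℕ) + 1 ≤ q + 1 ∧ (w k : ℕ) + 1 ≤ p)) \
      ((Finset.univ : Finset (Fin (n+1))).filter
        (fun k : Fin (n+1) => (k : ℕ) + 1 ≤ q ∧ (w k : ℕ) + 1 ≤ p)) =
      (if (w ⟨q, by omega⟩ : ℕ) + 1 ≤ p then {(⟨q, by omega⟩ : Fin (n+1))} else ∅) := by
    ext a
    split_ifs with hc
    · simp only [Finset.mem_sdiff, Finset.mem_filter, Finset.mem_univ, true_and,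
        Finset.mem_singleton]
      constructor
      · rintro ⟨⟨h1, h2⟩, h3⟩
        have ha : (a : ℕ) = q := by
          by_cases hA : (a : ℕ) + 1 ≤ q
          · exact absurd ⟨hA, h2⟩ h3
          · omega
        exact Fin.ext ha
      · rintro rfl
        refine ⟨⟨by simp, hc⟩, ?_⟩
        rintro ⟨h1, -⟩
        simp at h1
    · simp only [Finset.mem_sdiff, Finset.mem_filter, Finset.mem_univ, true_and,
        Finset.notMem_empty, iff_false]
      rintro ⟨⟨h1, h2⟩, h3⟩
      have ha : (a : ℕ) = q := by
        by_cases hA : (a : ℕ) + 1 ≤ q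
        · exact absurd ⟨hA, h2⟩ h3
        · omega
      have : a = (⟨q, by omega⟩ : Fin (n+1)) := Fin.ext ha
      rw [this] at h2
      exact hc h2
  rw [hd]
  split_ifs <;> simp [Nat.add_comm]

lemma rnum_succ_p (p q : ℕ) (hp : p ≤ n) :
    rnum n w (p+1) q = rnum n w p q + (if (w.symm ⟨p, by omega⟩ : ℕ) + 1 ≤ q then 1 else 0) := by
  classical
  unfold rnum
  have hsub : ((Finset.univ : Finset (Fin (n+1))).filter
        (fun k : Fin (n+1) => (k : ℕ) + 1 ≤ q ∧ (w k : ℕ) + 1 ≤ p)) ⊆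
      ((Finset.univ : Finset (Fin (n+1))).filter
        (fun k : Fin (n+1) => (k : ℕ) + 1 ≤ q ∧ (w k : ℕ) + 1 ≤ p + 1)) := by
    intro k hk
    simp only [Finset.mem_filter, Finset.mem_univ, true_and] at *
    omega
  rw [← Finset.card_sdiff_add_card_eq_card hsub]
  have hd : ((Finset.univ : Finset (Fin (n+1))).filter
        (fun k : Fin (n+1) => (k : ℕ) + 1 ≤ q ∧ (w k : ℕ) + 1 ≤ p + 1)) \
      ((Finset.univ : Finset (Fin (n+1))).filter
        (fun k : Fin (n+1) => (k : ℕ) + 1 ≤ q ∧ (w k : ℕ) + 1 ≤ p)) =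
      (if (w.symm ⟨p, by omega⟩ : ℕ) + 1 ≤ q then {w.symm (⟨p, by omega⟩ : Fin (n+1))} else ∅) := by
    ext a
    have hkey : ∀ b : Fin (n+1), (w b : ℕ) = p ↔ b = w.symm (⟨p, by omega⟩ : Fin (n+1)) := by
      intro b
      constructor
      · intro hb
        have : w b = (⟨p, by omega⟩ : Fin (n+1)) := Fin.ext hb
        rw [← this]
        simp
      · intro hb
        rw [hb]
        simp
    split_ifs with hc
    · simp only [Finset.mem_sdiff, Finset.mem_filter, Finset.mem_univ, true_and,
        Finset.mem_singleton]
      constructor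
      · rintro ⟨⟨h1, h2⟩, h3⟩
        have ha : (w a : ℕ) = p := by
          by_cases hA : (w a : ℕ) + 1 ≤ p
          · exact absurd ⟨h1, hA⟩ h3
          · omega
        exact (hkey a).mp ha
      · rintro rfl
        have hv : (w (w.symm (⟨p, by omega⟩ : Fin (n+1))) : ℕ) = p := by simp
        refine ⟨⟨hc, by omega⟩, ?_⟩
        rintro ⟨-, h2⟩
        omega
    · simp only [Finset.mem_sdiff, Finset.mem_filter, Finset.mem_univ, true_and,
        Finset.notMem_empty, iff_false]
      rintro ⟨⟨h1, h2⟩, h3⟩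
      have ha : (w a : ℕ) = p := by
        by_cases hA : (w a : ℕ) + 1 ≤ p
        · exact absurd ⟨h1, hA⟩ h3
        · omega
      have := (hkey a).mp ha
      rw [this] at h1
      exact hc h1
  rw [hd]
  split_ifs <;> simp [Nat.add_comm]

lemma card_filter_comp_perm (P : Fin (n+1) → Prop) [DecidablePred P] (e : Equiv.Perm (Fin (n+1))) :
    ((Finset.univ : Finset (Fin (n+1))).filter (fun x => P (e x))).card =
      ((Finset.univ : Finset (Fin (n+1))).filter P).card := by
  classical
  apply Finset.card_bij (fun x _ => e x)
  · intro a ha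
    simp only [Finset.mem_filter, Finset.mem_univ, true_and] at *
    exact ha
  · intro a _ b _ hab
    exact e.injective hab
  · intro y hy
    simp only [Finset.mem_filter, Finset.mem_univ, true_and] at *
    exact ⟨e.symm y, by simpa using hy, by simp⟩

lemma rnum_top (p : ℕ) (hp : p ≤ n+1) : rnum n w p (n+1) = p := by
  classical
  unfold rnum
  have h1 : ((Finset.univ : Finset (Fin (n+1))).filter
        (fun k : Fin (n+1) => (k : ℕ) + 1 ≤ n + 1 ∧ (w k : ℕ) + 1 ≤ p)) =
      ((Finset.univ : Finset (Fin (n+1))).filter (fun k => ((w k : ℕ) + 1 ≤ p))) := by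
    ext a
    simp only [Finset.mem_filter, Finset.mem_univ, true_and]
    have := a.isLt
    omega
  rw [h1, card_filter_comp_perm n (fun x : Fin (n+1) => (x : ℕ) + 1 ≤ p) w]
  have : ((Finset.univ : Finset (Fin (n+1))).filter (fun x : Fin (n+1) => (x : ℕ) + 1 ≤ p)).card
      = (Finset.range p).card := by
    apply Finset.card_bij (fun (x : Fin (n+1)) _ => (x : ℕ))
    · intro a ha
      simp only [Finset.mem_filter, Finset.mem_univ, true_and, Finset.mem_range] at *
      omega
    · intro a _ b _ hab
      exact Fin.ext hab
    · intro m hm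
      simp only [Finset.mem_range] at hm
      exact ⟨⟨m, by omega⟩, by simp; omega, rfl⟩
  rw [this, Finset.card_range]


lemma sT_apply (i : ℕ) (h1 : 1 ≤ i) (h2 : i ≤ n) (x : Fin (n+1)) :
    ((sT n i) x : ℕ) = if (x : ℕ) = i - 1 then i else if (x : ℕ) = i then i - 1 else (x : ℕ) := by
  unfold sT
  rw [dif_pos ⟨h1, h2⟩]
  by_cases hx1 : (x : ℕ) = i - 1
  · have : x = (⟨i - 1, by omega⟩ : Fin (n+1)) := Fin.ext hx1
    rw [if_pos hx1, this, Equiv.swap_apply_left]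
  · by_cases hx2 : (x : ℕ) = i
    · have : x = (⟨i, by omega⟩ : Fin (n+1)) := Fin.ext hx2
      rw [if_neg hx1, if_pos hx2, this, Equiv.swap_apply_right]
    · rw [if_neg hx1, if_neg hx2, Equiv.swap_apply_of_ne_of_ne]
      · intro h; exact hx1 (by rw [h])
      · intro h; exact hx2 (by rw [h])

lemma cycle_apply (b : ℕ) (hb : 1 ≤ b) : ∀ len, b + len ≤ n + 1 → ∀ x : Fin (n+1),
    ((((List.range' b len).reverse.map (sT n)).prod) x : ℕ) =
      if (x : ℕ) = b - 1 then b - 1 + len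
      else if b ≤ (x : ℕ) ∧ (x : ℕ) ≤ b - 1 + len then (x : ℕ) - 1 else (x : ℕ) := by
  intro len
  induction len with
  | zero =>
    intro _ x
    simp only [List.range', List.reverse_nil, List.map_nil, List.prod_nil,
      Equiv.Perm.coe_one, id_eq]
    split_ifs <;> omega
  | succ m ih =>
    intro hlen x
    have hr : List.range' b (m+1) = List.range' b m ++ [b + m] := by
      rw [List.range'_concat]; simp
    rw [hr, List.reverse_append, List.reverse_singleton, List.singleton_append,
      List.map_cons, List.prod_cons, Equiv.Perm.mul_apply]
    have hy := ih (by omega) x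
    set y := (((List.range' b m).reverse.map (sT n)).prod) x with hy'
    have hs := sT_apply n (b + m) (by omega) (by omega) y
    rw [hs, hy]
    split_ifs <;> omega

def bnumN (v : ℕ) : ℕ :=
  if h : v ≤ n then rnum n w (v+1) ((w.symm ⟨v, by omega⟩ : ℕ) + 1) else v + 1

lemma bnumN_eq (v : ℕ) (hv : v ≤ n) :
    bnumN n w v = rnum n w (v+1) ((w.symm ⟨v, by omega⟩ : ℕ) + 1) := dif_pos hv

lemma bnumN_pos (v : ℕ) (hv : v ≤ n) : 1 ≤ bnumN n w v := by
  rw [bnumN_eq n w v hv, rnum, Nat.succ_le_iff, Finset.card_pos]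
  refine ⟨w.symm ⟨v, by omega⟩, ?_⟩
  simp only [Finset.mem_filter, Finset.mem_univ, true_and]
  constructor
  · omega
  · rw [Equiv.apply_symm_apply]

lemma bnumN_le (v : ℕ) (hv : v ≤ n) : bnumN n w v ≤ v + 1 := by
  rw [bnumN_eq n w v hv]
  exact rnum_le n w _ _

def blockW (v : ℕ) : List ℕ := (List.range' (bnumN n w v) (v + 1 - bnumN n w v)).reverse

def wordFrom (k : ℕ) : List ℕ := (List.range' k (n + 1 - k)).flatMap (blockW n w)

def uAux (k : ℕ) : Equiv.Perm (Fin (n+1)) := w * (((wordFrom n w k).map (sT n)).prod)⁻¹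

lemma blockW_prod_apply (k : ℕ) (hk : k ≤ n) (x : Fin (n+1)) :
    ((((blockW n w k).map (sT n)).prod) x : ℕ) =
      if (x : ℕ) = bnumN n w k - 1 then k
      else if bnumN n w k ≤ (x : ℕ) ∧ (x : ℕ) ≤ k then (x : ℕ) - 1 else (x : ℕ) := by
  have hb1 := bnumN_pos n w k hk
  have hb2 := bnumN_le n w k hk
  have h := cycle_apply n (bnumN n w k) hb1 (k + 1 - bnumN n w k) (by omega) x
  unfold blockW
  rw [h]
  have he : bnumN n w k - 1 + (k + 1 - bnumN n w k) = k := by omega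
  rw [he]

lemma wordFrom_split (k : ℕ) (hk : k ≤ n) :
    wordFrom n w k = blockW n w k ++ wordFrom n w (k+1) := by
  unfold wordFrom
  have h1 : n + 1 - k = (n - k) + 1 := by omega
  have h2 : n + 1 - (k+1) = n - k := by omega
  rw [h1, h2]
  rw [show List.range' k (n - k + 1) = k :: List.range' (k+1) (n-k) by
    rw [List.range'_succ]]
  rw [List.flatMap_cons]

lemma invariant : ∀ d k, k + d = n + 1 →
    (∀ x : Fin (n+1), k ≤ (x : ℕ) → uAux n w k x = x) ∧
    (∀ i j : Fin (n+1), (i : ℕ) < k → (j : ℕ) < k →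
      (((uAux n w k).symm i : ℕ) < ((uAux n w k).symm j : ℕ) ↔
        ((w.symm i : ℕ) < (w.symm j : ℕ)))) := by
  intro d
  induction d with
  | zero =>
    intro k hk
    have hk' : k = n + 1 := by omega
    subst hk'
    have hu : uAux n w (n+1) = w := by
      unfold uAux wordFrom
      simp
    constructor
    · intro x hx
      exact absurd x.isLt (by omega)
    · intro i j hi hj
      rw [hu]
  | succ m ih =>
    intro k hk
    obtain ⟨h1', h2'⟩ := ih (k+1) (by omega)
    have hkn : k ≤ n := by omega
    set b := bnumN n w k with hbdef
    have hb1 : 1 ≤ b := bnumN_pos n w k hkn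
    have hb2 : b ≤ k + 1 := bnumN_le n w k hkn
    set B := ((blockW n w k).map (sT n)).prod with hBdef
    set u' := uAux n w (k+1) with hu'def
    have hBx : ∀ x : Fin (n+1), ((B x : ℕ)) =
        if (x : ℕ) = b - 1 then k
        else if b ≤ (x : ℕ) ∧ (x : ℕ) ≤ k then (x : ℕ) - 1 else (x : ℕ) :=
      fun x => blockW_prod_apply n w k hkn x
    have hsplit : uAux n w k = u' * B⁻¹ := by
      rw [hu'def]
      unfold uAux
      rw [wordFrom_split n w k hkn, List.map_append, List.prod_append, mul_inv_rev, ← mul_assoc,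
        ← hBdef]
    have hsymm_fix : ∀ x : Fin (n+1), k + 1 ≤ (x : ℕ) → u'.symm x = x := by
      intro x hx
      have h := h1' x hx
      conv_lhs => rw [← h]
      exact Equiv.symm_apply_apply _ _
    have hval_le : ∀ j : Fin (n+1), (j : ℕ) ≤ k → ((u'.symm j : ℕ)) ≤ k := by
      intro j hj
      by_contra hcon
      push_neg at hcon
      have h := h1' (u'.symm j) (by omega)
      rw [Equiv.apply_symm_apply] at h
      have := congrArg Fin.val h
      omega
    set kF : Fin (n+1) := ⟨k, by omega⟩ with hkF
    set c := u'.symm kF with hcdef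
    have hc_le : (c : ℕ) ≤ k := hval_le kF (Nat.le_refl k)
    have h2le : ∀ j : Fin (n+1), (j : ℕ) ≤ k →
        (((u'.symm j : ℕ)) ≤ (c : ℕ) ↔ ((w.symm j : ℕ) ≤ (w.symm kF : ℕ))) := by
      intro j hj
      by_cases hjk : j = kF
      · subst hjk
        simp
        exact le_rfl
      · have hjlt : (j : ℕ) < k := by
          rcases Nat.lt_or_ge (j : ℕ) k with h | h
          · exact h
          · exact absurd (Fin.ext (by omega : (j : ℕ) = k)) hjk
        have hiff := h2' j kF (by omega) (by simp [hkF])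
        have hne1 : u'.symm j ≠ c := fun h => hjk (u'.symm.injective h)
        have hne1' : ((u'.symm j : ℕ)) ≠ (c : ℕ) := fun h => hne1 (Fin.ext h)
        have hne2 : w.symm j ≠ w.symm kF := fun h => hjk (w.symm.injective h)
        have hne2' : ((w.symm j : ℕ)) ≠ ((w.symm kF : ℕ)) := fun h => hne2 (Fin.ext h)
        constructor
        · intro h
          have hlt : ((u'.symm j : ℕ)) < (c : ℕ) := by omega
          have := hiff.mp hlt
          omega
        · intro h
          have hlt : ((w.symm j : ℕ)) < ((w.symm kF : ℕ)) := by omega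
          have := hiff.mpr hlt
          omega
    have hcount : (c : ℕ) + 1 = b := by
      classical
      have hcard2 : ((Finset.univ : Finset (Fin (n+1))).filter
          (fun y : Fin (n+1) => (y : ℕ) ≤ (c : ℕ))).card = (c : ℕ) + 1 := by
        have hS2 : ((Finset.univ : Finset (Fin (n+1))).filter
            (fun y : Fin (n+1) => (y : ℕ) ≤ (c : ℕ))) = Finset.Iic c := by
          ext y
          simp only [Finset.mem_filter, Finset.mem_univ, true_and, Finset.mem_Iic, Fin.le_def]
        rw [hS2, Fin.card_Iic]
      have hcard1 : ((Finset.univ : Finset (Fin (n+1))).filter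
            (fun j : Fin (n+1) => (j : ℕ) ≤ k ∧ ((u'.symm j : ℕ)) ≤ (c : ℕ))).card
          = (c : ℕ) + 1 := by
        rw [← hcard2]
        apply Finset.card_bij (fun j _ => u'.symm j)
        · intro a ha
          simp only [Finset.mem_filter, Finset.mem_univ, true_and] at *
          exact ha.2
        · intro a _ a' _ hab
          exact u'.symm.injective hab
        · intro y hy
          simp only [Finset.mem_filter, Finset.mem_univ, true_and] at hy
          refine ⟨u' y, ?_, by simp⟩
          simp only [Finset.mem_filter, Finset.mem_univ, true_and]
          constructor
          · by_contra hcon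
            push_neg at hcon
            have h := hsymm_fix (u' y) (by omega)
            rw [Equiv.symm_apply_apply] at h
            have := congrArg Fin.val h
            omega
          · simp only [Equiv.symm_apply_apply]
            exact hy
      have hS1 : ((Finset.univ : Finset (Fin (n+1))).filter
            (fun j : Fin (n+1) => (j : ℕ) ≤ k ∧ ((u'.symm j : ℕ)) ≤ (c : ℕ))) =
          ((Finset.univ : Finset (Fin (n+1))).filter
            (fun j : Fin (n+1) => (j : ℕ) ≤ k ∧ ((w.symm j : ℕ)) ≤ ((w.symm kF : ℕ)))) := by
        ext j
        simp only [Finset.mem_filter, Finset.mem_univ, true_and]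
        constructor
        · rintro ⟨hj, h⟩
          exact ⟨hj, (h2le j hj).mp h⟩
        · rintro ⟨hj, h⟩
          exact ⟨hj, (h2le j hj).mpr h⟩
      have hbcard : b = ((Finset.univ : Finset (Fin (n+1))).filter
          (fun j : Fin (n+1) => (j : ℕ) ≤ k ∧ ((w.symm j : ℕ)) ≤ ((w.symm kF : ℕ)))).card := by
        rw [hbdef, bnumN_eq n w k hkn, rnum]
        rw [← card_filter_comp_perm n
          (fun j : Fin (n+1) => (j : ℕ) ≤ k ∧ ((w.symm j : ℕ)) ≤ ((w.symm kF : ℕ))) w]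
        congr 1
        ext x
        simp only [Finset.mem_filter, Finset.mem_univ, true_and, Equiv.symm_apply_apply]
        rw [show ((w.symm (⟨k, by omega⟩ : Fin (n+1)) : Fin (n+1)) : ℕ) = ((w.symm kF : ℕ)) from rfl]
        constructor
        · rintro ⟨hA, hB⟩
          exact ⟨by omega, by omega⟩
        · rintro ⟨hA, hB⟩
          exact ⟨by omega, by omega⟩
      rw [hS1, ← hbcard] at hcard1
      omega
    have hcb : (c : ℕ) = b - 1 := by omega
    have hBc : B c = kF := by
      apply Fin.ext
      rw [hBx c, if_pos hcb]
    have hBinvk : B⁻¹ kF = c := by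
      rw [← hBc]
      simp
    constructor
    · intro x hx
      rw [hsplit, Equiv.Perm.mul_apply]
      rcases Nat.eq_or_lt_of_le hx with hxe | hxl
      · have hxk : x = kF := Fin.ext (show (x : ℕ) = k by omega)
        rw [hxk, show (B⁻¹ : Equiv.Perm (Fin (n+1))) kF = c from hBinvk, hcdef,
          Equiv.apply_symm_apply]
      · have hBfix : B x = x := by
          apply Fin.ext
          rw [hBx x, if_neg (by omega), if_neg (by omega)]
        have hBifix : B⁻¹ x = x := by
          have h2 : (B⁻¹ : Equiv.Perm (Fin (n+1))) (B x) = B⁻¹ x := congrArg _ hBfix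
          rw [← Equiv.Perm.mul_apply, inv_mul_cancel, Equiv.Perm.one_apply] at h2
          exact h2.symm
        rw [hBifix]
        exact h1' x (by omega)
    · intro i j hi hj
      rw [hsplit]
      have happ : ∀ i : Fin (n+1), ((u' * B⁻¹).symm) i = B (u'.symm i) := by
        intro i
        rw [← Equiv.Perm.inv_def, mul_inv_rev, inv_inv, Equiv.Perm.mul_apply, Equiv.Perm.inv_def]
      rw [happ i, happ j]
      rw [← h2' i j (by omega) (by omega)]
      set yi := u'.symm i with hyidef
      set yj := u'.symm j with hyjdef
      have hyi_le : (yi : ℕ) ≤ k := hval_le i (by omega)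
      have hyj_le : (yj : ℕ) ≤ k := hval_le j (by omega)
      have hyi_ne : (yi : ℕ) ≠ b - 1 := by
        intro h
        have : yi = c := Fin.ext (by omega)
        have : i = kF := u'.symm.injective this
        have := congrArg Fin.val this
        simp [hkF] at this
        omega
      have hyj_ne : (yj : ℕ) ≠ b - 1 := by
        intro h
        have : yj = c := Fin.ext (by omega)
        have : j = kF := u'.symm.injective this
        have := congrArg Fin.val this
        simp [hkF] at this
        omega
      rw [hBx yi, hBx yj]
      split_ifs <;> omega

def theWord : List ℕ := wordFrom n w 0

lemma theWord_prod : ((theWord n w).map (sT n)).prod = w := by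
  have h := (invariant n w (n+1) 0 (by omega)).1
  have hu : uAux n w 0 = 1 := by
    apply Equiv.ext
    intro x
    rw [h x (Nat.zero_le _)]
    rfl
  unfold uAux at hu
  exact (mul_inv_eq_one.mp hu).symm

lemma theWord_letters : ∀ i ∈ theWord n w, 1 ≤ i ∧ i ≤ n := by
  intro i hi
  unfold theWord wordFrom at hi
  rw [List.mem_flatMap] at hi
  obtain ⟨v, hv, hiv⟩ := hi
  rw [List.mem_range'_1] at hv
  unfold blockW at hiv
  rw [List.mem_reverse, List.mem_range'_1] at hiv
  have h1 := bnumN_pos n w v (by omega)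
  omega

lemma sum_range_list (mm : ℕ) (f : ℕ → ℕ) :
    ((List.range mm).map f).sum = ∑ i ∈ Finset.range mm, f i := by
  induction mm with
  | zero => simp
  | succ k ih =>
    rw [List.range_succ, Finset.sum_range_succ]
    simp [ih]

lemma theWord_length : (theWord n w).length = pLen n w := by
  classical
  have hL : (theWord n w).length = ∑ v ∈ Finset.range (n+1), (v + 1 - bnumN n w v) := by
    unfold theWord wordFrom
    rw [show List.range' 0 (n+1-0) = List.range (n+1) by
      rw [Nat.sub_zero, ← List.range_eq_range']]
    rw [List.length_flatMap]
    have hmap : (List.range (n+1)).map (fun a => (blockW n w a).length) =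
        (List.range (n+1)).map (fun v => v + 1 - bnumN n w v) := by
      apply List.map_congr_left
      intro v _
      simp [blockW]
    rw [hmap, sum_range_list]
  have hfib : ∀ i : Fin (n+1),
      ((Finset.univ : Finset (Fin (n+1))).filter (fun j => i < j ∧ w j < w i)).card
        + bnumN n w (w i) = (w i : ℕ) + 1 := by
    intro i
    have hwi : ((w i : ℕ)) ≤ n := by
      have := (w i).isLt
      omega
    rw [bnumN_eq n w (w i) hwi]
    have hsymm : w.symm (⟨((w i : ℕ)), by omega⟩ : Fin (n+1)) = i := by
      rw [show (⟨((w i : ℕ)), by omega⟩ : Fin (n+1)) = w i from Fin.ext rfl]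
      simp
    rw [hsymm, rnum]
    have hdisj : Disjoint
        ((Finset.univ : Finset (Fin (n+1))).filter (fun j => i < j ∧ w j < w i))
        ((Finset.univ : Finset (Fin (n+1))).filter
          (fun k : Fin (n+1) => (k : ℕ) + 1 ≤ (i : ℕ) + 1 ∧ (w k : ℕ) + 1 ≤ (w i : ℕ) + 1)) := by
      rw [Finset.disjoint_left]
      intro a ha hb
      simp only [Finset.mem_filter, Finset.mem_univ, true_and, Fin.lt_def] at ha hb
      omega
    rw [← Finset.card_union_of_disjoint hdisj]
    have hunion : ((Finset.univ : Finset (Fin (n+1))).filter (fun j => i < j ∧ w j < w i)) ∪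
        ((Finset.univ : Finset (Fin (n+1))).filter
          (fun k : Fin (n+1) => (k : ℕ) + 1 ≤ (i : ℕ) + 1 ∧ (w k : ℕ) + 1 ≤ (w i : ℕ) + 1)) =
        ((Finset.univ : Finset (Fin (n+1))).filter
          (fun j : Fin (n+1) => (j : ℕ) + 1 ≤ n + 1 ∧ (w j : ℕ) + 1 ≤ (w i : ℕ) + 1)) := by
      ext a
      simp only [Finset.mem_union, Finset.mem_filter, Finset.mem_univ, true_and, Fin.lt_def]
      constructor
      · rintro (⟨h1, h2⟩ | ⟨h1, h2⟩)
        · have := a.isLt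
          omega
        · have := a.isLt
          omega
      · rintro ⟨h1, h2⟩
        rcases Nat.lt_or_ge (i : ℕ) (a : ℕ) with h | h
        · left
          refine ⟨h, ?_⟩
          have hne : (w a : ℕ) ≠ (w i : ℕ) := by
            intro he
            have : w a = w i := Fin.ext he
            have : a = i := w.injective this
            omega
          omega
        · right
          omega
    rw [hunion]
    have := rnum_top n w ((w i : ℕ) + 1) (by omega)
    rw [rnum] at this
    rw [this]
  have hRHS : pLen n w = ∑ i : Fin (n+1),
      ((Finset.univ : Finset (Fin (n+1))).filter (fun j => i < j ∧ w j < w i)).card := by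
    rw [pLen]
    rw [Finset.card_eq_sum_card_fiberwise
      (f := Prod.fst) (t := (Finset.univ : Finset (Fin (n+1)))) (fun x _ => Finset.mem_univ _)]
    apply Finset.sum_congr rfl
    intro i _
    apply Finset.card_bij (fun ij _ => ij.2)
    · intro a ha
      simp only [Finset.mem_filter, Finset.mem_univ, true_and] at *
      obtain ⟨⟨h1, h2⟩, h3⟩ := ha
      rw [h3] at h1 h2
      exact ⟨h1, h2⟩
    · intro a ha a' ha' hab
      simp only [Finset.mem_filter, Finset.mem_univ, true_and] at ha ha'
      have : a.1 = a'.1 := by rw [ha.2, ha'.2]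
      exact Prod.ext this hab
    · intro j hj
      simp only [Finset.mem_filter, Finset.mem_univ, true_and] at hj
      exact ⟨(i, j), by simp only [Finset.mem_filter, Finset.mem_univ, true_and]; exact ⟨hj, by trivial⟩, rfl⟩
  rw [hRHS, hL]
  have h1 : ∀ i : Fin (n+1),
      ((Finset.univ : Finset (Fin (n+1))).filter (fun j => i < j ∧ w j < w i)).card
        = ((w i : ℕ) + 1) - bnumN n w (w i) := by
    intro i
    have := hfib i
    omega
  rw [Finset.sum_congr rfl (fun i _ => h1 i)]
  rw [show (fun i : Fin (n+1) => ((w i : ℕ) + 1) - bnumN n w (w i)) =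
    (fun i : Fin (n+1) => (fun v : Fin (n+1) => ((v : ℕ) + 1) - bnumN n w (v : ℕ)) (w i)) from rfl]
  rw [Equiv.sum_comp w (fun v : Fin (n+1) => ((v : ℕ) + 1) - bnumN n w (v : ℕ))]
  rw [Fin.sum_univ_eq_sum_range (fun v => (v + 1) - bnumN n w v) (n+1)]

lemma fiber_image (v : ℕ) (hv : v ≤ n) :
    (((relevantFinset n w).filter (fun pq => pq.1 = v + 1)).image
        (fun pq => rnum n w pq.1 pq.2)) = Finset.Ico (bnumN n w v) (v + 1) := by
  classical
  have hb1 : 1 ≤ bnumN n w v := bnumN_pos n w v hv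
  have hb2 : bnumN n w v ≤ v + 1 := bnumN_le n w v hv
  set vF : Fin (n+1) := ⟨v, by omega⟩ with hvFdef
  set mm : ℕ := (w.symm vF : ℕ) + 1 with hmmdef
  have hmn : mm ≤ n + 1 := by
    have := (w.symm vF).isLt
    omega
  have hbeq : bnumN n w v = rnum n w (v+1) mm := by
    rw [bnumN_eq n w v hv, hmmdef, hvFdef]
  have hwmm : rnum n w (v+1) mm = rnum n w (v+1) (mm - 1) + 1 := by
    have h := rnum_succ_q n w (v+1) (mm - 1) (by omega)
    rw [show (w (⟨mm - 1, by omega⟩ : Fin (n+1)) : ℕ) = v from by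
      rw [show (⟨mm - 1, by omega⟩ : Fin (n+1)) = w.symm vF from Fin.ext (by
          show mm - 1 = ((w.symm vF : Fin (n+1)) : ℕ)
          omega),
        Equiv.apply_symm_apply]] at h
    rw [if_pos (by omega), show mm - 1 + 1 = mm by omega] at h
    exact h
  have hsp : ∀ q : ℕ, rnum n w (v+1) q = rnum n w v q + (if mm ≤ q then 1 else 0) := by
    intro q
    have h := rnum_succ_p n w v q hv
    rw [show ((w.symm (⟨v, by omega⟩ : Fin (n+1)) : ℕ) + 1) = mm from by
      rw [hmmdef, hvFdef]] at h
    exact h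
  ext j
  simp only [Finset.mem_image, Finset.mem_filter, Finset.mem_Ico]
  constructor
  · rintro ⟨⟨p, q⟩, ⟨hrel, hp⟩, hj⟩
    simp only at hp
    subst hp
    rw [relevantFinset, Finset.mem_filter] at hrel
    obtain ⟨hmem, hc1, hc2, hc3⟩ := hrel
    simp only at hc1 hc2 hc3
    rw [Finset.mem_product, Finset.mem_Icc, Finset.mem_Icc] at hmem
    simp only at hj
    rw [show v + 1 - 1 = v from rfl] at hc2
    have hspq := hsp q
    have hm_le : mm ≤ q := by
      by_contra hcon
      rw [if_neg hcon] at hspq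
      omega
    have hb_le : bnumN n w v ≤ rnum n w (v+1) q := by
      rw [hbeq]
      exact rnum_mono n w (v+1) hm_le
    omega
  · rintro ⟨hbj, hjv⟩
    have hex : ∃ q, j ≤ rnum n w (v+1) q :=
      ⟨n+1, by rw [rnum_top n w (v+1) (by omega)]; omega⟩
    obtain ⟨q, hq, hmin'⟩ := Nat.find_spec (⟨Nat.find hex, Nat.find_spec hex,
      fun q' hq' => Nat.find_min hex hq'⟩ :
        ∃ q, (j ≤ rnum n w (v+1) q) ∧ ∀ q' < q, ¬ (j ≤ rnum n w (v+1) q'))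
      |> fun _ => (⟨Nat.find hex, Nat.find_spec hex,
        fun q' hq' => Nat.find_min hex hq'⟩ :
        ∃ q, (j ≤ rnum n w (v+1) q) ∧ ∀ q' < q, ¬ (j ≤ rnum n w (v+1) q'))
    have hmin : ∀ q' < q, rnum n w (v+1) q' < j := by
      intro q' h
      have := hmin' q' h
      omega
    have hq_le : q ≤ n + 1 := by
      by_contra hcon
      push_neg at hcon
      have := hmin (n+1) (by omega)
      rw [rnum_top n w (v+1) (by omega)] at this
      omega
    have hq1 : 1 ≤ q := by
      by_contra hcon
      push_neg at hcon
      have hq0 : q = 0 := by omega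
      rw [hq0, rnum_q_zero] at hq
      omega
    have hstep := rnum_succ_q n w (v+1) (q-1) (by omega)
    rw [show q - 1 + 1 = q by omega] at hstep
    have hless := hmin (q-1) (by omega)
    have hrq : rnum n w (v+1) q = j ∧ rnum n w (v+1) (q-1) + 1 = rnum n w (v+1) q := by
      split_ifs at hstep <;> omega
    have hm_le : mm ≤ q := by
      by_contra hcon
      push_neg at hcon
      have hmono := rnum_mono n w (v+1) (show q ≤ mm - 1 by omega)
      omega
    have hqn : q ≤ n := by
      by_contra hcon
      push_neg at hcon
      have hqe : q = n + 1 := by omega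
      rw [hqe, rnum_top n w (v+1) (by omega)] at hrq
      omega
    refine ⟨(v+1, q), ⟨?_, rfl⟩, ?_⟩
    · rw [relevantFinset, Finset.mem_filter]
      refine ⟨?_, ?_, ?_, ?_⟩
      · rw [Finset.mem_product, Finset.mem_Icc, Finset.mem_Icc]
        exact ⟨⟨by omega, by omega⟩, by omega, by omega⟩
      · simp only
        omega
      · simp only
        have h := hsp q
        rw [if_pos hm_le] at h
        rw [show v + 1 - 1 = v from rfl]
        omega
      · simp only
        omega
    · simp only
      omega

lemma fiber_injOn (v : ℕ) (hv : v ≤ n) :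
    Set.InjOn (fun pq : ℕ × ℕ => rnum n w pq.1 pq.2)
      (((relevantFinset n w).filter (fun pq => pq.1 = v + 1)) : Finset (ℕ × ℕ)) := by
  classical
  have key : ∀ a b : ℕ × ℕ,
      a ∈ ((relevantFinset n w).filter (fun pq => pq.1 = v + 1)) →
      b ∈ ((relevantFinset n w).filter (fun pq => pq.1 = v + 1)) →
      a.2 < b.2 → rnum n w a.1 a.2 ≠ rnum n w b.1 b.2 := by
    intro a b ha hb hab
    rw [Finset.mem_filter] at ha hb
    obtain ⟨hra, hpa⟩ := ha
    obtain ⟨hrb, hpb⟩ := hb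
    rw [relevantFinset, Finset.mem_filter] at hra hrb
    obtain ⟨-, -, -, hc3⟩ := hrb
    have hmono := rnum_mono n w b.1 (show a.2 ≤ b.2 - 1 by omega)
    rw [hpa, ← hpb]
    omega
  intro a ha b hb hab
  simp only [Finset.coe_filter, Set.mem_setOf_eq] at ha hb
  have ha' : a ∈ ((relevantFinset n w).filter (fun pq => pq.1 = v + 1)) := by
    rw [Finset.mem_filter]; exact ⟨ha.1, ha.2⟩
  have hb' : b ∈ ((relevantFinset n w).filter (fun pq => pq.1 = v + 1)) := by
    rw [Finset.mem_filter]; exact ⟨hb.1, hb.2⟩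
  rcases lt_trichotomy a.2 b.2 with h | h | h
  · exact absurd hab (key a b ha' hb' h)
  · exact Prod.ext (by rw [ha.2, hb.2]) h
  · exact absurd hab.symm (key b a hb' ha' h)

lemma coe_flatMap (l : List ℕ) (f : ℕ → List ℕ) :
    ((l.flatMap f : List ℕ) : Multiset ℕ) = (l : Multiset ℕ).bind (fun a => (f a : Multiset ℕ)) := by
  simp

lemma theWord_multiset :
    ((theWord n w : List ℕ) : Multiset ℕ) =
      (relevantFinset n w).val.map (fun pq => rnum n w pq.1 pq.2) := by
  classical
  have hdisj : ((Finset.Icc 1 (n+1) : Finset ℕ) : Set ℕ).PairwiseDisjoint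
      (fun p => (relevantFinset n w).filter (fun pq => pq.1 = p)) := by
    intro p _ p' _ hne
    simp only [Function.onFun]
    rw [Finset.disjoint_left]
    intro a ha ha'
    rw [Finset.mem_filter] at ha ha'
    exact hne (by rw [← ha.2, ← ha'.2])
  have hS : relevantFinset n w = (Finset.Icc 1 (n+1)).disjiUnion
      (fun p => (relevantFinset n w).filter (fun pq => pq.1 = p)) hdisj := by
    ext pq
    rw [Finset.mem_disjiUnion]
    constructor
    · intro h
      refine ⟨pq.1, ?_, by rw [Finset.mem_filter]; exact ⟨h, rfl⟩⟩
      have h' := h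
      rw [relevantFinset, Finset.mem_filter, Finset.mem_product] at h'
      exact h'.1.1
    · rintro ⟨p, hp, hmem⟩
      exact (Finset.mem_filter.mp hmem).1
  conv_rhs => rw [hS]
  rw [Finset.disjiUnion_val, Multiset.map_bind]
  have hIcc : (Finset.Icc 1 (n+1) : Finset ℕ).val =
      (Multiset.range (n+1)).map (· + 1) := by
    have himg : (Finset.Icc 1 (n+1) : Finset ℕ) = (Finset.range (n+1)).image (· + 1) := by
      ext a
      simp only [Finset.mem_Icc, Finset.mem_image, Finset.mem_range]
      constructor
      · intro h
        exact ⟨a - 1, by omega, by omega⟩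
      · rintro ⟨b, hb, rfl⟩
        omega
    rw [himg, Finset.image_val_of_injOn (fun a _ b _ h => by omega), Finset.range_val]
  rw [hIcc, Multiset.bind_map]
  have hLHS : ((theWord n w : List ℕ) : Multiset ℕ) =
      ((List.range (n+1) : List ℕ) : Multiset ℕ).bind
        (fun v => ((blockW n w v : List ℕ) : Multiset ℕ)) := by
    rw [theWord, wordFrom, show List.range' 0 (n+1-0) = List.range (n+1) by
      rw [Nat.sub_zero, ← List.range_eq_range']]
    rw [coe_flatMap]
  rw [hLHS, Multiset.coe_range]
  apply Multiset.bind_congr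
  intro v hv
  rw [Multiset.mem_range] at hv
  have hvn : v ≤ n := by omega
  have h1 : ((relevantFinset n w).filter (fun pq => pq.1 = v + 1)).val.map
      (fun pq => rnum n w pq.1 pq.2) = (Finset.Ico (bnumN n w v) (v + 1)).val := by
    rw [← Finset.image_val_of_injOn (fiber_injOn n w v hvn), fiber_image n w v hvn]
  rw [h1]
  rw [Nat.Ico_eq_range']
  rw [blockW]
  exact (Multiset.coe_reverse _)

end GeomAux

/-- Every permutation of `{1, …, n+1}` admits a geometrically compatible reduced
decomposition. -/
theorem exists_geomCompatible (n : ℕ) (w : Equiv.Perm (Fin (n+1))) :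
    ∃ L : List ℕ, IsGeomCompatible n w L :=
  ⟨GeomAux.theWord n w,
    ⟨GeomAux.theWord_letters n w, GeomAux.theWord_prod n w, GeomAux.theWord_length n w⟩,
    GeomAux.theWord_multiset n w⟩
end

section
/- Let ŵ be a permutation of {1,…,n+1}, let i ∈ {1,…,n}, set q_i = ŵ^{-1}(i) and q_{i+1} = ŵ^{-1}(i+1), and assume ℓ(s_i∘ŵ) = ℓ(ŵ) + 1. Then for all 1 ≤ p ≤ n+1 and 1 ≤ q ≤ n+1: r^{s_i∘ŵ}_{p,q} = r^{ŵ}_{p,q} − 1 if p = i and q_i ≤ q < q_{i+1}, and r^{s_i∘ŵ}_{p,q} = r^{ŵ}_{p,q} otherwise. -/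
/-- Lemma on the change of the numbers `r^w_{p,q}` under left multiplication by a simple
transposition `s_i` with `ℓ(s_i ∘ ŵ) = ℓ(ŵ) + 1`: with `q_i = ŵ⁻¹(i)` and
`q_{i+1} = ŵ⁻¹(i+1)` (1-indexed), the entry decreases by one exactly when `p = i` and
`q_i ≤ q < q_{i+1}`, and is unchanged otherwise. -/
theorem rnum_mul_simple (n : ℕ) (w : Equiv.Perm (Fin (n+1))) (i : ℕ)
    (hi1 : 1 ≤ i) (hi2 : i ≤ n) (qi qi1 : ℕ)
    (hqi : qi = ((w⁻¹ ⟨i - 1, by omega⟩ : Fin (n+1)) : ℕ) + 1)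
    (hqi1 : qi1 = ((w⁻¹ ⟨i, by omega⟩ : Fin (n+1)) : ℕ) + 1)
    (hlen : pLen n (sT n i * w) = pLen n w + 1) :
    ∀ p q : ℕ, 1 ≤ p → p ≤ n+1 → 1 ≤ q → q ≤ n+1 →
      ((p = i ∧ qi ≤ q ∧ q < qi1) →
        rnum n (sT n i * w) p q = rnum n w p q - 1) ∧
      (¬(p = i ∧ qi ≤ q ∧ q < qi1) →
        rnum n (sT n i * w) p q = rnum n w p q) := by
  have hu : i - 1 < n + 1 := by omega
  have hv : i < n + 1 := by omega
  set u : Fin (n+1) := ⟨i-1, hu⟩ with hudef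
  set v : Fin (n+1) := ⟨i, hv⟩ with hvdef
  have hu1 : (u : ℕ) = i - 1 := rfl
  have hv1 : (v : ℕ) = i := rfl
  have hsT : sT n i = Equiv.swap u v := by
    rw [sT, dif_pos (show 1 ≤ i ∧ i ≤ n from ⟨hi1, hi2⟩)]
  set a : Fin (n+1) := w⁻¹ u with ha
  set b : Fin (n+1) := w⁻¹ v with hb
  have hwa : w a = u := by rw [ha]; exact Equiv.apply_symm_apply w u
  have hwb : w b = v := by rw [hb]; exact Equiv.apply_symm_apply w v
  have hqa : qi = (a : ℕ) + 1 := hqi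
  have hqb : qi1 = (b : ℕ) + 1 := hqi1
  have hval1 : ∀ x : Fin (n+1), ((w x : Fin (n+1)) : ℕ) = i - 1 ↔ (x : ℕ) = (a : ℕ) := by
    intro x
    rw [show i - 1 = (u : ℕ) from rfl, ← hwa, Fin.val_eq_val, Fin.val_eq_val,
      Equiv.apply_eq_iff_eq]
  have hval2 : ∀ x : Fin (n+1), ((w x : Fin (n+1)) : ℕ) = i ↔ (x : ℕ) = (b : ℕ) := by
    intro x
    rw [show i = (v : ℕ) from rfl, ← hwb, Fin.val_eq_val, Fin.val_eq_val,
      Equiv.apply_eq_iff_eq]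
  have hinj : ∀ x y : Fin (n+1), ((w x : Fin (n+1)) : ℕ) = ((w y : Fin (n+1)) : ℕ) ↔
      (x : ℕ) = (y : ℕ) := by
    intro x y
    rw [Fin.val_eq_val, Fin.val_eq_val, Equiv.apply_eq_iff_eq]
  have hswap : ∀ x : Fin (n+1), (((sT n i * w) x : Fin (n+1)) : ℕ) =
      if ((w x : Fin (n+1)) : ℕ) = i - 1 then i
      else if ((w x : Fin (n+1)) : ℕ) = i then i - 1 else ((w x : Fin (n+1)) : ℕ) := by
    intro x
    rw [Equiv.Perm.mul_apply, hsT, Equiv.swap_apply_def]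
    have e1 : (w x = u) ↔ ((w x : Fin (n+1)) : ℕ) = i - 1 := by rw [Fin.ext_iff, hu1]
    have e2 : (w x = v) ↔ ((w x : Fin (n+1)) : ℕ) = i := by rw [Fin.ext_iff, hv1]
    simp only [e1, e2]
    split_ifs <;> omega
  have hne : (a : ℕ) ≠ (b : ℕ) := by
    intro h
    have h2 : w a = w b := congrArg w (Fin.ext h)
    rw [hwa, hwb] at h2
    have := congrArg Fin.val h2
    rw [hu1, hv1] at this
    omega
  have hab : (a : ℕ) < (b : ℕ) := by
    by_contra hba
    have hba' : (b : ℕ) < (a : ℕ) := by omega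
    have hset : ((Finset.univ : Finset (Fin (n+1) × Fin (n+1))).filter
        (fun ij : Fin (n+1) × Fin (n+1) => ij.1 < ij.2 ∧ (sT n i * w) ij.2 < (sT n i * w) ij.1)) =
        ((Finset.univ : Finset (Fin (n+1) × Fin (n+1))).filter
        (fun ij : Fin (n+1) × Fin (n+1) => ij.1 < ij.2 ∧ w ij.2 < w ij.1)).erase (b, a) := by
      ext ⟨j, k⟩
      have h1 := hval1 j; have h2 := hval2 j
      have h3 := hval1 k; have h4 := hval2 k
      have h5 := hinj j k
      simp only [Finset.mem_filter, Finset.mem_univ, true_and, Finset.mem_erase,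
        Fin.lt_def, hswap, Prod.mk.injEq, ne_eq, not_and, Fin.ext_iff]
      split_ifs <;> omega
    have hmem : ((b, a) : Fin (n+1) × Fin (n+1)) ∈
        ((Finset.univ : Finset (Fin (n+1) × Fin (n+1))).filter
        (fun ij : Fin (n+1) × Fin (n+1) => ij.1 < ij.2 ∧ w ij.2 < w ij.1)) := by
      simp only [Finset.mem_filter, Finset.mem_univ, true_and, Fin.lt_def, hwa, hwb]
      exact ⟨hba', by omega⟩
    have hpos := Finset.card_pos.mpr ⟨_, hmem⟩
    have hcard := Finset.card_erase_of_mem hmem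
    have hlen' := hlen
    simp only [pLen] at hlen'
    rw [hset, hcard] at hlen'
    omega
  intro p q hp1 hp2 hq1 hq2
  constructor
  · rintro ⟨hpi, hq_ge, hq_lt⟩
    have hSa : a ∈ (Finset.univ : Finset (Fin (n+1))).filter
        (fun k : Fin (n+1) => (k : ℕ) + 1 ≤ q ∧ ((w k : Fin (n+1)) : ℕ) + 1 ≤ p) := by
      simp only [Finset.mem_filter, Finset.mem_univ, true_and, hwa, hu1]
      omega
    have hset : ((Finset.univ : Finset (Fin (n+1))).filter
        (fun k : Fin (n+1) => (k : ℕ) + 1 ≤ q ∧ (((sT n i * w) k : Fin (n+1)) : ℕ) + 1 ≤ p)) =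
        ((Finset.univ : Finset (Fin (n+1))).filter
        (fun k : Fin (n+1) => (k : ℕ) + 1 ≤ q ∧ ((w k : Fin (n+1)) : ℕ) + 1 ≤ p)).erase a := by
      ext k
      have h1 := hval1 k; have h2 := hval2 k
      simp only [Finset.mem_filter, Finset.mem_univ, true_and, Finset.mem_erase,
        hswap, ne_eq, Fin.ext_iff]
      split_ifs <;> omega
    simp only [rnum]
    rw [hset, Finset.card_erase_of_mem hSa]
  · intro hnot
    by_cases hpi : p = i
    · have hq : q < qi ∨ qi1 ≤ q := by
        rcases Nat.lt_or_ge q qi with h | h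
        · exact Or.inl h
        · right; by_contra hc; exact hnot ⟨hpi, h, by omega⟩
      rcases hq with hq | hq
      · have hset : ((Finset.univ : Finset (Fin (n+1))).filter
            (fun k : Fin (n+1) => (k : ℕ) + 1 ≤ q ∧ (((sT n i * w) k : Fin (n+1)) : ℕ) + 1 ≤ p)) =
            ((Finset.univ : Finset (Fin (n+1))).filter
            (fun k : Fin (n+1) => (k : ℕ) + 1 ≤ q ∧ ((w k : Fin (n+1)) : ℕ) + 1 ≤ p)) := by
          ext k
          have h1 := hval1 k; have h2 := hval2 k
          simp only [Finset.mem_filter, Finset.mem_univ, true_and, hswap]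
          split_ifs <;> omega
        simp only [rnum]
        rw [hset]
      · have hSa : a ∈ (Finset.univ : Finset (Fin (n+1))).filter
            (fun k : Fin (n+1) => (k : ℕ) + 1 ≤ q ∧ ((w k : Fin (n+1)) : ℕ) + 1 ≤ p) := by
          simp only [Finset.mem_filter, Finset.mem_univ, true_and, hwa, hu1]
          omega
        have hbnot : b ∉ ((Finset.univ : Finset (Fin (n+1))).filter
            (fun k : Fin (n+1) => (k : ℕ) + 1 ≤ q ∧ ((w k : Fin (n+1)) : ℕ) + 1 ≤ p)).erase a := by
          simp only [Finset.mem_erase, Finset.mem_filter, Finset.mem_univ, true_and, hwb, hv1,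
            not_and]
          intro _ _
          omega
        have hset : ((Finset.univ : Finset (Fin (n+1))).filter
            (fun k : Fin (n+1) => (k : ℕ) + 1 ≤ q ∧ (((sT n i * w) k : Fin (n+1)) : ℕ) + 1 ≤ p)) =
            insert b (((Finset.univ : Finset (Fin (n+1))).filter
            (fun k : Fin (n+1) => (k : ℕ) + 1 ≤ q ∧ ((w k : Fin (n+1)) : ℕ) + 1 ≤ p)).erase a) := by
          ext k
          have h1 := hval1 k; have h2 := hval2 k
          simp only [Finset.mem_filter, Finset.mem_univ, true_and, Finset.mem_erase,
            Finset.mem_insert, hswap, ne_eq, Fin.ext_iff]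
          split_ifs <;> omega
        have hpos := Finset.card_pos.mpr ⟨_, hSa⟩
        have hcard := Finset.card_erase_of_mem hSa
        simp only [rnum]
        rw [hset, Finset.card_insert_of_notMem hbnot, hcard]
        omega
    · have hset : ((Finset.univ : Finset (Fin (n+1))).filter
          (fun k : Fin (n+1) => (k : ℕ) + 1 ≤ q ∧ (((sT n i * w) k : Fin (n+1)) : ℕ) + 1 ≤ p)) =
          ((Finset.univ : Finset (Fin (n+1))).filter
          (fun k : Fin (n+1) => (k : ℕ) + 1 ≤ q ∧ ((w k : Fin (n+1)) : ℕ) + 1 ≤ p)) := by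
        ext k
        have h1 := hval1 k; have h2 := hval2 k
        simp only [Finset.mem_filter, Finset.mem_univ, true_and, hswap]
        split_ifs <;> omega
      simp only [rnum]
      rw [hset]
end

section
/- Let n ≥ 2. Regard Fin(n+1) with its linear order as a poset category, and let M' : Fin(n+1) ⥤ ModuleCat ℂ be the functor with M'(i) = F_{i+1} (the span of the first i+1 standard basis vectors of ℂ^{n+1}), whose maps are the submodule inclusions. Then Ext¹(M', M') = 0 in the abelian category of functors Fin(n+1) ⥤ ModuleCat ℂ; that is, M' is a rigid representation of the equioriented A_{n+1} quiver. -/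
open CategoryTheory

lemma Fstd_mono (n : ℕ) {p p' : ℕ} (h : p ≤ p') : Fstd n p ≤ Fstd n p' :=
  Submodule.span_mono (Set.image_mono (fun _ hi => lt_of_lt_of_le hi h))

/-- The representation `M'` of the equioriented `A_{n+1}` quiver, regarded as a functor on
the linearly ordered poset `Fin (n+1)`: the value at `i` is `F (i+1)` and the maps are the
submodule inclusions. -/
noncomputable def MprimeFun (n : ℕ) : Fin (n+1) ⥤ ModuleCat ℂ where
  obj i := ModuleCat.of ℂ (Fstd n ((i : ℕ) + 1))
  map {i j} f := ModuleCat.ofHom (Submodule.inclusion (Fstd_mono n (by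
      have h : i ≤ j := leOfHom f
      exact Nat.add_le_add_right h 1)) : Fstd n ((i : ℕ) + 1) →ₗ[ℂ] Fstd n ((j : ℕ) + 1))
  map_id _ := rfl
  map_comp _ _ := rfl


namespace ExtVanishingAux

open CategoryTheory.Limits HomologicalComplex DerivedCategory

universe w' w v u
variable {C : Type u} [Category.{v} C] [Abelian C]

variable {C : Type u} [Category.{v} C] [Abelian C]

lemma section_of_quasiIso_to_single (X : C)
    (hX : ∀ {W : C} (u : W ⟶ X), Epi u → ∃ σ, σ ≫ u = 𝟙 X)
    {Z : CochainComplex C ℤ} (s : Z ⟶ (single C (ComplexShape.up ℤ) 0).obj X) [QuasiIso s] :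
    ∃ t, t ≫ s = 𝟙 _ := by
  have hiso : IsIso (homologyMap s 0) := by
    rw [← quasiIsoAt_iff_isIso_homologyMap]
    infer_instance
  set u : Z.cycles 0 ⟶ X :=
    cyclesMap s 0 ≫ (singleObjCyclesSelfIso (ComplexShape.up ℤ) 0 X).hom with hu_def
  have hu_eq : u = Z.homologyπ 0 ≫ homologyMap s 0 ≫
      (singleObjHomologySelfIso (ComplexShape.up ℤ) 0 X).hom := by
    rw [hu_def, ← homologyπ_singleObjHomologySelfIso_hom, ← Category.assoc,
      ← homologyπ_naturality, Category.assoc]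
  have hu : Epi u := by
    rw [hu_eq]
    infer_instance
  obtain ⟨σ₀, hσ₀⟩ := hX u hu
  refine ⟨mkHomFromSingle (σ₀ ≫ Z.iCycles 0) (fun k _ => by simp), ?_⟩
  ext
  have h1 : Z.iCycles 0 ≫ s.f 0 = cyclesMap s 0 ≫
      ((single C (ComplexShape.up ℤ) 0).obj X).iCycles 0 := (cyclesMap_i s 0).symm
  simp only [comp_f, mkHomFromSingle_f, id_f, Category.assoc, h1]
  have h2 : σ₀ ≫ cyclesMap s 0 ≫ ((single C (ComplexShape.up ℤ) 0).obj X).iCycles 0 =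
      (singleObjXSelf (ComplexShape.up ℤ) 0 X).inv := by
    rw [← cancel_mono (singleObjXSelf (ComplexShape.up ℤ) 0 X).hom, Category.assoc,
      Category.assoc, ← singleObjCyclesSelfIso_hom, ← hu_def, hσ₀]
    simp
  rw [h2, Iso.hom_inv_id]

lemma single_to_shift_single_eq_zero (X Y : C)
    (f : (single C (ComplexShape.up ℤ) 0).obj X ⟶
      ((single C (ComplexShape.up ℤ) 0).obj Y)⟦(1:ℤ)⟧) : f = 0 := by
  apply from_single_hom_ext
  have : IsZero ((((single C (ComplexShape.up ℤ) 0).obj Y)⟦(1:ℤ)⟧).X 0) := by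
    rw [CochainComplex.shiftFunctor_obj_X']
    exact isZero_single_obj_X _ 0 Y (0 + 1) (by norm_num)
  exact this.eq_of_tgt _ _

lemma hom_Qh_single_zero [HasDerivedCategory.{w} C] (X : C)
    (hX : ∀ {W : C} (u : W ⟶ X), Epi u → ∃ σ, σ ≫ u = 𝟙 X)
    (B : CochainComplex C ℤ)
    (hB : ∀ (g : (single C (ComplexShape.up ℤ) 0).obj X ⟶ B), g = 0)
    (φ : Qh.obj ((HomotopyCategory.quotient C (ComplexShape.up ℤ)).obj
        ((single C (ComplexShape.up ℤ) 0).obj X)) ⟶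
      Qh.obj ((HomotopyCategory.quotient C (ComplexShape.up ℤ)).obj B)) : φ = 0 := by
  have : (HomotopyCategory.quasiIso C (ComplexShape.up ℤ)).HasRightCalculusOfFractions := by
    rw [HomotopyCategory.quasiIso_eq_subcategoryAcyclic_W]
    infer_instance
  obtain ⟨ψ, hψ⟩ := Localization.exists_rightFraction Qh
    (HomotopyCategory.quasiIso C (ComplexShape.up ℤ)) φ
  obtain ⟨s', hs'⟩ := (HomotopyCategory.quotient C (ComplexShape.up ℤ)).map_surjective ψ.s
  obtain ⟨f', hf'⟩ := (HomotopyCategory.quotient C (ComplexShape.up ℤ)).map_surjective ψ.f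
  have hqs : QuasiIso s' := by
    rw [← HomologicalComplex.mem_quasiIso_iff,
      ← HomotopyCategory.quotient_map_mem_quasiIso_iff, hs']
    exact ψ.hs
  obtain ⟨t, ht⟩ := section_of_quasiIso_to_single X hX s'
  have hiso : IsIso (Qh.map ψ.s) :=
    Localization.inverts Qh (HomotopyCategory.quasiIso C (ComplexShape.up ℤ)) ψ.s ψ.hs
  have h3 : Qh.map ψ.s ≫ φ = Qh.map ψ.f := by rw [hψ]; exact ψ.map_s_comp_map _ _
  have h4 : φ = Qh.map ((HomotopyCategory.quotient C (ComplexShape.up ℤ)).map t) ≫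
      Qh.map ψ.f := by
    erw [← h3, ← Category.assoc, ← Qh.map_comp, ← hs',
      ← (HomotopyCategory.quotient C (ComplexShape.up ℤ)).map_comp, ht,
      CategoryTheory.Functor.map_id, Category.id_comp]
  rw [h4, ← hf', ← Qh.map_comp,
    ← (HomotopyCategory.quotient C (ComplexShape.up ℤ)).map_comp, hB (t ≫ f'),
    Functor.map_zero, Functor.map_zero]

lemma ext_one_subsingleton [HasDerivedCategory.{w} C] [CategoryTheory.HasExt.{w'} C] (X Y : C)
    (hX : ∀ {W : C} (u : W ⟶ X), Epi u → ∃ σ, σ ≫ u = 𝟙 X) :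
    Subsingleton (Abelian.Ext X Y 1) := by
  have key : ∀ (e : Abelian.Ext X Y 1), e = 0 := by
    intro e
    apply Abelian.Ext.ext
    rw [Abelian.Ext.zero_hom]
    let AY := (HomotopyCategory.quotient C (ComplexShape.up ℤ)).obj
      ((single C (ComplexShape.up ℤ) 0).obj Y)
    let γ : Qh.obj ((HomotopyCategory.quotient C (ComplexShape.up ℤ)).obj
        (((single C (ComplexShape.up ℤ) 0).obj Y)⟦(1:ℤ)⟧)) ≅
        ((DerivedCategory.singleFunctor C 0).obj Y)⟦(1:ℤ)⟧ :=
      Qh.mapIso (((HomotopyCategory.quotient C (ComplexShape.up ℤ)).commShiftIso (1:ℤ)).app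
        ((single C (ComplexShape.up ℤ) 0).obj Y)) ≪≫ (Qh.commShiftIso (1:ℤ)).app AY
    have h0 : e.hom ≫ γ.inv = 0 :=
      hom_Qh_single_zero X hX _ (fun g => single_to_shift_single_eq_zero X Y g)
        (e.hom ≫ γ.inv)
    have h1 : e.hom = (e.hom ≫ γ.inv) ≫ γ.hom := by simp
    rw [h1, h0, Limits.zero_comp]
  exact ⟨fun a b => by rw [key a, key b]⟩

end ExtVanishingAux

namespace MprimeSplitAux

noncomputable def sigmaT (n : ℕ) (W : Fin (n+1) ⥤ ModuleCat ℂ)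
    (w : ∀ k : Fin (n+1), W.obj k) (i : Fin (n+1)) : (Fin (n+1) → ℂ) →ₗ[ℂ] W.obj i :=
  (Pi.basisFun ℂ (Fin (n+1))).constr ℂ
    (fun k => if h : k ≤ i then (W.map (homOfLE h)) (w k) else 0)

lemma sigmaT_single (n : ℕ) (W : Fin (n+1) ⥤ ModuleCat ℂ)
    (w : ∀ k : Fin (n+1), W.obj k) (i k : Fin (n+1)) (h : k ≤ i) :
    sigmaT n W w i (Pi.single k 1) = (W.map (homOfLE h)) (w k) := by
  rw [show (Pi.single k 1 : Fin (n+1) → ℂ) = Pi.basisFun ℂ (Fin (n+1)) k from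
    (Pi.basisFun_apply ℂ (Fin (n+1)) k).symm]
  rw [sigmaT, Module.Basis.constr_basis, dif_pos h]

lemma sigmaT_compat (n : ℕ) (W : Fin (n+1) ⥤ ModuleCat ℂ)
    (w : ∀ k : Fin (n+1), W.obj k) {i j : Fin (n+1)} (hij : i ≤ j)
    {v : Fin (n+1) → ℂ} (hv : v ∈ Fstd n ((i:ℕ)+1)) :
    sigmaT n W w j v = (W.map (homOfLE hij)) (sigmaT n W w i v) := by
  induction hv using Submodule.span_induction with
  | mem x hx =>
      obtain ⟨k, hk, rfl⟩ := hx
      have hki : k ≤ i := by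
        have : (k:ℕ) < (i:ℕ)+1 := hk
        exact Fin.le_def.mpr (Nat.lt_succ_iff.mp this)
      rw [sigmaT_single n W w i k hki, sigmaT_single n W w j k (hki.trans hij),
        show homOfLE (hki.trans hij) = homOfLE hki ≫ homOfLE hij from rfl, W.map_comp]
      rfl
  | zero => simp only [map_zero]
  | add x y _ _ hx hy => simp only [map_add, hx, hy]
  | smul a x _ hx => simp only [map_smul, hx]

lemma Mprime_split (n : ℕ) {W : Fin (n+1) ⥤ ModuleCat ℂ} (u : W ⟶ MprimeFun n)
    (hu : Epi u) : ∃ σ, σ ≫ u = 𝟙 (MprimeFun n) := by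
  have hepi : ∀ k : Fin (n+1), Epi (u.app k) := fun k => inferInstance
  have hsurj : ∀ k : Fin (n+1), Function.Surjective (u.app k) := fun k =>
    (ModuleCat.epi_iff_surjective (u.app k)).1 (hepi k)
  have hmem : ∀ k : Fin (n+1), (Pi.single k 1 : Fin (n+1) → ℂ) ∈ Fstd n ((k:ℕ)+1) :=
    fun k => Submodule.subset_span ⟨k, Nat.lt_succ_self _, rfl⟩
  choose w hw using fun k : Fin (n+1) =>
    hsurj k (⟨Pi.single k 1, hmem k⟩ : Fstd n ((k:ℕ)+1))
  refine ⟨{ app := fun i => ModuleCat.ofHom ((sigmaT n W w i).comp (Fstd n ((i:ℕ)+1)).subtype)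
            naturality := ?_ }, ?_⟩
  · intro i j f
    ext x
    have hij : i ≤ j := leOfHom f
    have : ((MprimeFun n).map f ≫ ModuleCat.ofHom ((sigmaT n W w j).comp (Fstd n ((j:ℕ)+1)).subtype)) x
        = sigmaT n W w j x.1 := rfl
    rw [this]
    have : (ModuleCat.ofHom ((sigmaT n W w i).comp (Fstd n ((i:ℕ)+1)).subtype) ≫ W.map f) x
        = (W.map f) (sigmaT n W w i x.1) := rfl
    erw [this]
    rw [show f = homOfLE hij from rfl]
    exact sigmaT_compat n W w hij x.2
  · ext i x
    have : ∀ (v : Fin (n+1) → ℂ) (hv : v ∈ Fstd n ((i:ℕ)+1)),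
        (u.app i) (sigmaT n W w i v) = (⟨v, hv⟩ : Fstd n ((i:ℕ)+1)) := by
      intro v hv
      induction hv using Submodule.span_induction with
      | mem x hx =>
          obtain ⟨k, hk, rfl⟩ := hx
          have hki : k ≤ i := Fin.le_def.mpr (Nat.lt_succ_iff.mp hk)
          rw [sigmaT_single n W w i k hki]
          have hnat : (u.app i) ((W.map (homOfLE hki)) (w k)) =
              ((MprimeFun n).map (homOfLE hki)) ((u.app k) (w k)) :=
            ConcreteCategory.congr_hom (u.naturality (homOfLE hki)) (w k)
          rw [hnat, hw k]
          rfl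
      | zero => simp only [map_zero]; exact Subtype.ext rfl
      | add x y hx' hy' hx hy =>
          rw [map_add, map_add, hx, hy]; exact Subtype.ext rfl
      | smul a x hx' hx =>
          rw [map_smul, map_smul, hx]; exact Subtype.ext rfl
    have h2 : (ModuleCat.ofHom ((sigmaT n W w i).comp (Fstd n ((i:ℕ)+1)).subtype) ≫ u.app i) x
        = (u.app i) (sigmaT n W w i x.1) := rfl
    rw [NatTrans.comp_app, NatTrans.id_app]
    exact this x.1 x.2

end MprimeSplitAux

set_option synthInstance.maxHeartbeats 1000000 in
/-- `M'` is a rigid representation of the equioriented `A_{n+1}` quiver: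
`Ext¹(M', M') = 0` in the abelian functor category `Fin (n+1) ⥤ ModuleCat ℂ`. -/
theorem MprimeFun_rigid (n : ℕ) (hn : 2 ≤ n) :
    letI : HasDerivedCategory (Fin (n+1) ⥤ ModuleCat ℂ) := HasDerivedCategory.standard _
    letI : HasExt (Fin (n+1) ⥤ ModuleCat ℂ) := hasExt_of_hasDerivedCategory _
    Subsingleton (Abelian.Ext (MprimeFun n) (MprimeFun n) 1) := by
  letI : HasDerivedCategory (Fin (n+1) ⥤ ModuleCat ℂ) := HasDerivedCategory.standard _
  letI : HasExt (Fin (n+1) ⥤ ModuleCat ℂ) := hasExt_of_hasDerivedCategory _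
  exact ExtVanishingAux.ext_one_subsingleton (MprimeFun n) (MprimeFun n)
    (fun {W} u hu => MprimeSplitAux.Mprime_split n u hu)
end

section
/- Let n ≥ 2 and let M' : Fin(n+1) ⥤ ModuleCat ℂ be the functor with M'(i) = F_{i+1} and maps the submodule inclusions. For 0 ≤ i ≤ n, let U_i : Fin(n+1) ⥤ ModuleCat ℂ be the functor with U_i(j) = ℂ for j ≥ i and U_i(j) = 0 for j < i, whose maps between nonzero values are identities. Then M' is isomorphic to the direct sum ⨁_{i=0}^{n} U_i in the functor category Fin(n+1) ⥤ ModuleCat ℂ. -/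
open CategoryTheory CategoryTheory.Limits

/-- The submodule of `ℂ` which is everything for `i ≤ j` and `0` otherwise; the carrier of
the value of the interval representation `U_i` at the vertex `j`. -/
noncomputable def usub (n : ℕ) (i j : Fin (n+1)) : Submodule ℂ ℂ := if i ≤ j then ⊤ else ⊥

lemma usub_mono (n : ℕ) (i : Fin (n+1)) : Monotone (usub n i) := by
  intro j j' hjj'
  unfold usub
  by_cases h : i ≤ j
  · rw [if_pos h, if_pos (le_trans h hjj')]
  · rw [if_neg h]
    exact bot_le

/-- The indecomposable representation `U_i` of the equioriented `A_{n+1}` quiver,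
supported on the vertices `i, i+1, …, n`, with value `ℂ` there (realised as the full
submodule of `ℂ`), value `0` elsewhere, and identity maps between the nonzero values. -/
noncomputable def Ufun (n : ℕ) (i : Fin (n+1)) : Fin (n+1) ⥤ ModuleCat ℂ where
  obj j := ModuleCat.of ℂ (usub n i j)
  map {j j'} f := ModuleCat.ofHom (Submodule.inclusion (usub_mono n i (leOfHom f)) :
    usub n i j →ₗ[ℂ] usub n i j')
  map_id _ := rfl
  map_comp _ _ := rfl


lemma Fstd_apply_eq_zero {n p : ℕ} {v : Fin (n+1) → ℂ} (hv : v ∈ Fstd n p)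
    {i : Fin (n+1)} (hi : p ≤ (i : ℕ)) : v i = 0 := by
  induction hv using Submodule.span_induction with
  | mem x hx =>
    obtain ⟨k, hk, rfl⟩ := hx
    simp only [Set.mem_setOf_eq] at hk
    show (Pi.single k 1 : Fin (n+1) → ℂ) i = 0
    rw [Pi.single_apply, if_neg]
    intro h; subst h; omega
  | zero => rfl
  | add x y _ _ hx hy => simp [hx, hy]
  | smul c x _ hx => simp [hx]

/-- Projection `M' ⟶ U i` at vertex `j`: take the `i`-th coordinate. -/
noncomputable def projL (n : ℕ) (i j : Fin (n+1)) :
    Fstd n ((j : ℕ) + 1) →ₗ[ℂ] usub n i j where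
  toFun v := ⟨v.1 i, by
    by_cases h : i ≤ j
    · simp [usub, h]
    · have hij : (j : ℕ) + 1 ≤ (i : ℕ) := Nat.succ_le_of_lt (lt_of_not_ge h)
      simp [usub, h, Fstd_apply_eq_zero v.2 hij]⟩
  map_add' x y := rfl
  map_smul' c x := rfl

/-- Injection `U i ⟶ M'` at vertex `j`: `a ↦ a • e_i`. -/
noncomputable def injL (n : ℕ) (i j : Fin (n+1)) :
    usub n i j →ₗ[ℂ] Fstd n ((j : ℕ) + 1) where
  toFun v := ⟨v.1 • (Pi.single i 1 : Fin (n+1) → ℂ), by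
    by_cases h : i ≤ j
    · exact Submodule.smul_mem _ _ (Submodule.subset_span
        ⟨i, by simpa using Nat.lt_succ_of_le h, rfl⟩)
    · have hv : v.1 = 0 := by
        have := v.2
        simpa [usub, h] using this
      simp [hv]⟩
  map_add' x y := by apply Subtype.ext; simp [add_smul]
  map_smul' c x := by apply Subtype.ext; simp [smul_smul]

noncomputable def projT (n : ℕ) (i : Fin (n+1)) : MprimeFun n ⟶ Ufun n i where
  app j := ModuleCat.ofHom (projL n i j)
  naturality _ _ _ := rfl

noncomputable def injT (n : ℕ) (i : Fin (n+1)) : Ufun n i ⟶ MprimeFun n where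
  app j := ModuleCat.ofHom (injL n i j)
  naturality _ _ _ := rfl

lemma sum_inj_proj (n : ℕ) (j : Fin (n+1)) :
    ∑ i : Fin (n+1), (injL n i j).comp (projL n i j) = LinearMap.id := by
  apply LinearMap.ext; intro v
  rw [LinearMap.sum_apply]
  apply Subtype.ext
  rw [Submodule.coe_sum]
  show ∑ i : Fin (n+1), v.1 i • (Pi.single i 1 : Fin (n+1) → ℂ) = v.1
  have : ∀ i : Fin (n+1), v.1 i • (Pi.single i 1 : Fin (n+1) → ℂ)
      = Pi.single i (v.1 i) := by
    intro i
    rw [← Pi.single_smul, smul_eq_mul, mul_one]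
  simp only [this]
  exact Finset.univ_sum_single v.1

lemma proj_inj_same (n : ℕ) (i j : Fin (n+1)) :
    (projL n i j).comp (injL n i j) = LinearMap.id := by
  apply LinearMap.ext; intro v
  apply Subtype.ext
  show v.1 • (Pi.single i 1 : Fin (n+1) → ℂ) i = v.1
  simp

lemma proj_inj_ne (n : ℕ) (i k j : Fin (n+1)) (h : i ≠ k) :
    (projL n k j).comp (injL n i j) = 0 := by
  apply LinearMap.ext; intro v
  apply Subtype.ext
  show v.1 • (Pi.single i 1 : Fin (n+1) → ℂ) k = 0
  simp [Pi.single_apply, h]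

/-- `M'` is isomorphic to the direct sum `⨁_{i=0}^{n} U_i` in the functor category
`Fin (n+1) ⥤ ModuleCat ℂ`. -/
theorem MprimeFun_iso_biproduct (n : ℕ) (hn : 2 ≤ n) :
    haveI : HasFiniteBiproducts (Fin (n+1) ⥤ ModuleCat ℂ) := Abelian.hasFiniteBiproducts
    Nonempty (MprimeFun n ≅ ⨁ fun i : Fin (n+1) => Ufun n i) := by
  haveI : HasFiniteBiproducts (Fin (n+1) ⥤ ModuleCat ℂ) := Abelian.hasFiniteBiproducts
  refine ⟨{ hom := biproduct.lift (fun i => projT n i)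
            inv := biproduct.desc (fun i => injT n i)
            hom_inv_id := ?_
            inv_hom_id := ?_ }⟩
  · rw [biproduct.lift_desc]
    apply NatTrans.ext
    funext j
    rw [NatTrans.app_sum]
    apply ModuleCat.hom_ext
    rw [ModuleCat.hom_sum]
    have : ∀ i : Fin (n+1), ((projT n i ≫ injT n i).app j).hom
        = (injL n i j).comp (projL n i j) := fun _ => rfl
    exact (Finset.sum_congr rfl (fun i _ => this i)).trans (sum_inj_proj n j)
  · apply biproduct.hom_ext
    intro k
    apply biproduct.hom_ext'
    intro i
    rw [Category.assoc, biproduct.lift_π, biproduct.ι_desc_assoc, Category.id_comp,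
      biproduct.ι_π]
    by_cases h : i = k
    · subst h
      rw [dif_pos rfl, eqToHom_refl]
      apply NatTrans.ext
      funext j
      show ModuleCat.ofHom ((projL n i j).comp (injL n i j))
        = 𝟙 ((Ufun n i).obj j)
      rw [proj_inj_same]
      rfl
    · rw [dif_neg h]
      apply NatTrans.ext
      funext j
      show ModuleCat.ofHom ((projL n k j).comp (injL n i j))
        = ((0 : Ufun n i ⟶ Ufun n k)).app j
      rw [proj_inj_ne n i k j h]
      rfl
end

section
/- Let n ≥ 2 and let M : Fin(n+1) × Fin(n) ⥤ ModuleCat ℂ be the functor with M(i,j) = F_{i+1} and maps the submodule inclusions. Let I₀ be the direct sum of n+2 copies of the constant functor with value ℂ (and identity maps), and let I₁ = ⨁_{i=0}^{n} J_i, where J_i : Fin(n+1) × Fin(n) ⥤ ModuleCat ℂ has J_i(p,q) = ℂ for p ≤ i and J_i(p,q) = 0 for p > i, with identity maps between nonzero values. Then I₀ and I₁ are injective objects of the functor category, and there exists a short exact sequence 0 → M → I₀ → I₁ → 0; in particular the injective dimension of M is at most 1. -/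
open CategoryTheory CategoryTheory.Limits

lemma Fstd_coord (n p : ℕ) {v : Fin (n+1) → ℂ} (hv : v ∈ Fstd n p) (j : Fin (n+1))
    (hj : p ≤ (j : ℕ)) : v j = 0 := by
  have hle : Fstd n p ≤ LinearMap.ker (LinearMap.proj j : (Fin (n+1) → ℂ) →ₗ[ℂ] ℂ) := by
    rw [Fstd, Submodule.span_le]
    rintro _ ⟨i, hi, rfl⟩
    simp only [SetLike.mem_coe, LinearMap.mem_ker, LinearMap.proj_apply]
    have hi' : (i : ℕ) < p := hi
    refine Pi.single_eq_of_ne (fun h => ?_) 1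
    rw [Fin.ext_iff] at h
    omega
  exact hle hv

lemma mem_Fstd (n p : ℕ) (v : Fin (n+1) → ℂ) (hv : ∀ j : Fin (n+1), p ≤ (j : ℕ) → v j = 0) :
    v ∈ Fstd n p := by
  have hrepr : v = ∑ j : Fin (n+1), v j • (Pi.single j 1 : Fin (n+1) → ℂ) := by
    funext k
    simp [Finset.sum_apply, Pi.single_apply, Finset.sum_ite_eq']
  rw [hrepr]
  refine Submodule.sum_mem _ fun j _ => ?_
  by_cases h : (j : ℕ) < p
  · exact Submodule.smul_mem _ _ (Submodule.subset_span ⟨j, h, rfl⟩)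
  · rw [hv j (le_of_not_gt h), zero_smul]
    exact Submodule.zero_mem _

/-- The representation `M` of the grid quiver with relations: `M(i,j) = F (i+1)` with the
submodule inclusions as maps (identities in the second coordinate). -/
noncomputable def Mgrid (n : ℕ) : (Fin (n+1) × Fin n) ⥤ ModuleCat ℂ where
  obj x := ModuleCat.of ℂ (Fstd n ((x.1 : ℕ) + 1))
  map {x y} f := ModuleCat.ofHom (Submodule.inclusion (Fstd_mono n (by
      have h : x.1 ≤ y.1 := leOfHom f.1
      exact Nat.add_le_add_right h 1)) : Fstd n ((x.1 : ℕ) + 1) →ₗ[ℂ] Fstd n ((y.1 : ℕ) + 1))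
  map_id _ := rfl
  map_comp _ _ := rfl

/-- The submodule of `ℂ` by which we quotient to obtain the value of the injective
representation `J_i` at the vertex `(p,q)`: it is `0` for `p ≤ i` and everything
for `p > i`, so that `ℂ / jsub n i (p,q)` is `ℂ` for `p ≤ i` and `0` for `p > i`. -/
noncomputable def jsub (n : ℕ) (i : Fin (n+1)) (x : Fin (n+1) × Fin n) : Submodule ℂ ℂ :=
  if x.1 ≤ i then ⊥ else ⊤

lemma jsub_mono (n : ℕ) (i : Fin (n+1)) {x y : Fin (n+1) × Fin n} (h : x.1 ≤ y.1) :
    jsub n i x ≤ jsub n i y := by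
  unfold jsub
  by_cases hx : x.1 ≤ i
  · rw [if_pos hx]
    exact bot_le
  · rw [if_neg hx, if_neg (fun hy => hx (le_trans h hy))]

/-- The indecomposable injective representation `J_i` of the grid quiver, with value `ℂ`
(realised as the quotient `ℂ/0`) at the vertices `(p,q)` with `p ≤ i`, value `0`
(realised as `ℂ/ℂ`) elsewhere, and identity maps between the nonzero values. -/
noncomputable def Jfun (n : ℕ) (i : Fin (n+1)) : (Fin (n+1) × Fin n) ⥤ ModuleCat ℂ where
  obj x := ModuleCat.of ℂ (ℂ ⧸ jsub n i x)
  map {x y} f := ModuleCat.ofHom (Submodule.mapQ (jsub n i x) (jsub n i y) LinearMap.id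
    (by rw [Submodule.comap_id]; exact jsub_mono n i (leOfHom f.1)))
  map_id x := by
    refine ModuleCat.hom_ext (LinearMap.ext fun a => ?_)
    obtain ⟨y, rfl⟩ := Submodule.Quotient.mk_surjective _ a
    rfl
  map_comp f g := by
    refine ModuleCat.hom_ext (LinearMap.ext fun a => ?_)
    obtain ⟨y, rfl⟩ := Submodule.Quotient.mk_surjective _ a
    rfl

/-- The constant functor on the grid with value `ℂ` (and identity maps). -/
noncomputable def constC (n : ℕ) : (Fin (n+1) × Fin n) ⥤ ModuleCat ℂ :=
  (Functor.const _).obj (ModuleCat.of ℂ ℂ)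

lemma Jfun_injective (n : ℕ) (hn : 1 ≤ n) (i : Fin (n+1)) : Injective (Jfun n i) := by
  constructor
  intro X Y g f hf
  set x₀ : Fin (n+1) × Fin n := (i, ⟨n-1, by omega⟩) with hx₀
  have hbot : jsub n i x₀ = ⊥ := by simp [jsub, hx₀]
  have hker : LinearMap.ker (f.app x₀).hom = ⊥ := by
    rw [LinearMap.ker_eq_bot]
    exact (ModuleCat.mono_iff_injective (f.app x₀)).mp inferInstance
  obtain ⟨r, hr⟩ := LinearMap.exists_leftInverse_of_injective (f.app x₀).hom hker
  let ψ : Y.obj x₀ →ₗ[ℂ] (ℂ ⧸ jsub n i x₀) := (g.app x₀).hom.comp r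
  have hle : ∀ y : Fin (n+1) × Fin n, jsub n i x₀ ≤
      Submodule.comap (LinearMap.id : ℂ →ₗ[ℂ] ℂ) (jsub n i y) := fun y => by
    rw [Submodule.comap_id, hbot]; exact bot_le
  have hy2 : ∀ y : Fin (n+1) × Fin n, y.2 ≤ x₀.2 := fun y => by
    have := y.2.isLt
    rw [Fin.le_def]
    show (y.2 : ℕ) ≤ n - 1
    omega
  let e : ∀ (y : Fin (n+1) × Fin n), y.1 ≤ i → (y ⟶ x₀) := fun y hy =>
    (homOfLE hy, homOfLE (hy2 y))
  haveI hss : ∀ y : Fin (n+1) × Fin n, Subsingleton (y ⟶ x₀) := fun y =>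
    ⟨fun a b => by
      obtain ⟨a1, a2⟩ := a
      obtain ⟨b1, b2⟩ := b
      have e1 : a1 = b1 := Subsingleton.elim _ _
      have e2 : a2 = b2 := Subsingleton.elim _ _
      rw [e1, e2]⟩
  let h : Y ⟶ Jfun n i :=
    { app := fun y =>
        if hy : y.1 ≤ i then ModuleCat.homEquiv.symm
          ((Submodule.mapQ (jsub n i x₀) (jsub n i y) LinearMap.id (hle y)).comp
            (ψ.comp (Y.map (e y hy)).hom))
        else 0
      naturality := by
        intro y y' a
        beta_reduce
        by_cases hy' : y'.1 ≤ i
        · have hy : y.1 ≤ i := le_trans (leOfHom a.1) hy'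
          rw [dif_pos hy, dif_pos hy']
          refine ModuleCat.hom_ext (LinearMap.ext fun t => ?_)
          have harr : (Y.map (e y' hy')).hom ((Y.map a).hom t)
              = (Y.map (e y hy)).hom t := by
            have : a ≫ e y' hy' = e y hy := @Subsingleton.elim _ (hss y) _ _
            rw [← this, Y.map_comp]
            rfl
          show (Submodule.mapQ (jsub n i x₀) (jsub n i y') LinearMap.id (hle y'))
              (ψ ((Y.map (e y' hy')).hom ((Y.map a).hom t)))
              = ((Jfun n i).map a).hom ((Submodule.mapQ (jsub n i x₀) (jsub n i y) LinearMap.id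
                (hle y)) (ψ ((Y.map (e y hy)).hom t)))
          rw [harr]
          generalize ψ ((Y.map (e y hy)).hom t) = q
          obtain ⟨c, rfl⟩ := Submodule.Quotient.mk_surjective _ q
          rfl
        · rw [dif_neg hy']
          haveI : Subsingleton (ℂ ⧸ jsub n i y') := by
            rw [Submodule.Quotient.subsingleton_iff]
            simp [jsub, hy']
          exact ModuleCat.hom_ext (LinearMap.ext fun t => Subsingleton.elim (α := ℂ ⧸ jsub n i y') _ _) }
  refine ⟨h, ?_⟩
  ext y t
  by_cases hy : y.1 ≤ i
  · show (h.app y).hom ((f.app y).hom t) = (g.app y).hom t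
    have h1 : h.app y = ModuleCat.homEquiv.symm ((Submodule.mapQ (jsub n i x₀) (jsub n i y) LinearMap.id (hle y)).comp
        (ψ.comp (Y.map (e y hy)).hom)) := dif_pos hy
    rw [h1]
    have hnatf : (Y.map (e y hy)).hom ((f.app y).hom t)
        = (f.app x₀).hom ((X.map (e y hy)).hom t) := by
      have := f.naturality (e y hy)
      exact (LinearMap.congr_fun (congrArg ModuleCat.Hom.hom this) t).symm
    have hpsi : ψ ((f.app x₀).hom ((X.map (e y hy)).hom t)) = (g.app x₀).hom ((X.map (e y hy)).hom t) := by
      have hrr : r ((f.app x₀).hom ((X.map (e y hy)).hom t)) = (X.map (e y hy)).hom t := by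
        simpa using LinearMap.congr_fun hr ((X.map (e y hy)).hom t)
      show (g.app x₀).hom (r ((f.app x₀).hom _)) = _
      rw [hrr]
    have hnatg : (g.app x₀).hom ((X.map (e y hy)).hom t)
        = ((Jfun n i).map (e y hy)).hom ((g.app y).hom t) := by
      have := g.naturality (e y hy)
      exact LinearMap.congr_fun (congrArg ModuleCat.Hom.hom this) t
    show (Submodule.mapQ (jsub n i x₀) (jsub n i y) LinearMap.id (hle y))
        (ψ ((Y.map (e y hy)).hom ((f.app y).hom t))) = _
    rw [hnatf, hpsi, hnatg]
    generalize (g.app y).hom t = q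
    obtain ⟨c, rfl⟩ := Submodule.Quotient.mk_surjective _ q
    rfl
  · haveI : Subsingleton (ℂ ⧸ jsub n i y) := by
      rw [Submodule.Quotient.subsingleton_iff]
      simp [jsub, hy]
    exact Subsingleton.elim (α := ℂ ⧸ jsub n i y) _ _

noncomputable def eConst (n : ℕ) : Jfun n (Fin.last n) ≅ constC n :=
  NatIso.ofComponents
    (fun x => (Submodule.quotEquivOfEqBot (jsub n (Fin.last n) x)
      (by simp [jsub, Fin.le_last])).toModuleIso)
    (fun {x y} a => by
      refine ModuleCat.hom_ext (LinearMap.ext fun q => ?_)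
      obtain ⟨c, rfl⟩ := Submodule.Quotient.mk_surjective _ q
      rfl)

lemma constC_injective (n : ℕ) (hn : 1 ≤ n) : Injective (constC n) :=
  Injective.of_iso (eConst n) (Jfun_injective n hn (Fin.last n))

lemma mapQ_id_eq (p : Submodule ℂ ℂ) (h : p ≤ p.comap (LinearMap.id : ℂ →ₗ[ℂ] ℂ))
    (z : ℂ ⧸ p) : Submodule.mapQ p p LinearMap.id h z = z := by
  obtain ⟨c, rfl⟩ := Submodule.Quotient.mk_surjective _ z
  rfl

lemma mapQ_id_comp (p q r : Submodule ℂ ℂ) (h1 : p ≤ q.comap (LinearMap.id : ℂ →ₗ[ℂ] ℂ))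
    (h2 : q ≤ r.comap (LinearMap.id : ℂ →ₗ[ℂ] ℂ))
    (h3 : p ≤ r.comap (LinearMap.id : ℂ →ₗ[ℂ] ℂ)) (z : ℂ ⧸ p) :
    Submodule.mapQ p r LinearMap.id h3 z
      = Submodule.mapQ q r LinearMap.id h2 (Submodule.mapQ p q LinearMap.id h1 z) := by
  obtain ⟨c, rfl⟩ := Submodule.Quotient.mk_surjective _ z
  rfl

noncomputable def P0 (n : ℕ) : (Fin (n+1) × Fin n) ⥤ ModuleCat ℂ :=
  (Functor.const _).obj (ModuleCat.of ℂ (Fin (n+2) → ℂ))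

noncomputable def P1 (n : ℕ) : (Fin (n+1) × Fin n) ⥤ ModuleCat ℂ where
  obj x := ModuleCat.of ℂ (∀ i : Fin (n+1), ℂ ⧸ jsub n i x)
  map {x y} f := ModuleCat.ofHom <| LinearMap.pi fun i =>
    (Submodule.mapQ (jsub n i x) (jsub n i y) LinearMap.id
      (by rw [Submodule.comap_id]; exact jsub_mono n i (leOfHom f.1))).comp
      (LinearMap.proj i)
  map_id x := ModuleCat.hom_ext <| LinearMap.ext fun a => funext fun i =>
    mapQ_id_eq _ (le_of_eq (Submodule.comap_id _).symm) (a i)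
  map_comp {x y z} f g := ModuleCat.hom_ext <| LinearMap.ext fun a => funext fun i =>
    mapQ_id_comp _ _ _ (by rw [Submodule.comap_id]; exact jsub_mono n i (leOfHom f.1))
      (by rw [Submodule.comap_id]; exact jsub_mono n i (leOfHom g.1))
      (by rw [Submodule.comap_id]; exact jsub_mono n i (le_trans (leOfHom f.1) (leOfHom g.1)))
      (a i)

noncomputable def f0app (n p : ℕ) : (Fstd n p) →ₗ[ℂ] (Fin (n+2) → ℂ) :=
  LinearMap.pi fun k : Fin (n+2) =>
    if h : (k : ℕ) < n+1 then
      (LinearMap.proj (⟨(k : ℕ), h⟩ : Fin (n+1))).comp (Fstd n p).subtype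
    else 0

lemma f0app_apply (n p : ℕ) (v : Fstd n p) (k : Fin (n+2)) :
    f0app n p v k = if h : (k : ℕ) < n+1 then (v : Fin (n+1) → ℂ) ⟨(k : ℕ), h⟩ else 0 := by
  by_cases h : (k : ℕ) < n+1
  · simp [f0app, h, Nat.le_of_lt_succ h]
  · simp [f0app, h, show ¬ (k : ℕ) ≤ n by omega]

noncomputable def f0 (n : ℕ) : Mgrid n ⟶ P0 n where
  app x := ModuleCat.ofHom (f0app n ((x.1 : ℕ) + 1))
  naturality {x y} a := by
    refine ModuleCat.hom_ext (LinearMap.ext fun (v : Fstd n ((x.1 : ℕ) + 1)) => funext fun k => ?_)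
    show f0app n ((y.1 : ℕ) + 1) (Submodule.inclusion (Fstd_mono n (by
        have h : x.1 ≤ y.1 := leOfHom a.1
        exact Nat.add_le_add_right h 1)) v) k = f0app n ((x.1 : ℕ) + 1) v k
    rw [f0app_apply, f0app_apply]
    split_ifs with h
    · rfl
    · rfl

noncomputable def g0 (n : ℕ) : P0 n ⟶ P1 n where
  app x := ModuleCat.ofHom (LinearMap.pi fun i : Fin (n+1) => (jsub n i x).mkQ.comp (LinearMap.proj i.succ) :
    (Fin (n+2) → ℂ) →ₗ[ℂ] ∀ i : Fin (n+1), ℂ ⧸ jsub n i x)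
  naturality {x y} a := by
    refine ModuleCat.hom_ext (LinearMap.ext fun u => funext fun i => ?_)
    rfl

lemma w0 (n : ℕ) : f0 n ≫ g0 n = 0 := by
  ext x (v : Fstd n ((x.1 : ℕ) + 1))
  show (fun i : Fin (n+1) => (jsub n i x).mkQ (f0app n ((x.1 : ℕ) + 1) v i.succ))
    = (fun i : Fin (n+1) => (0 : ℂ ⧸ jsub n i x))
  refine funext fun i => ?_
  rw [f0app_apply]
  by_cases h : (i.succ : ℕ) < n+1
  · rw [dif_pos h]
    by_cases hx : x.1 ≤ i
    · have hz := Fstd_coord n ((x.1 : ℕ) + 1) v.2 ⟨(i.succ : ℕ), h⟩ (by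
        show (x.1 : ℕ) + 1 ≤ (i : ℕ) + 1
        have : (x.1 : ℕ) ≤ (i : ℕ) := hx
        omega)
      rw [hz, map_zero]
    · exact (Submodule.Quotient.mk_eq_zero _).mpr (by simp [jsub, hx])
  · rw [dif_neg h, map_zero]

lemma f0_app_injective (n : ℕ) (x : Fin (n+1) × Fin n) :
    Function.Injective ((f0 n).app x).hom := by
  intro (v : Fstd n ((x.1 : ℕ) + 1)) (w : Fstd n ((x.1 : ℕ) + 1)) hvw
  apply Subtype.ext
  funext j
  have h2 : f0app n ((x.1 : ℕ)+1) v (Fin.castSucc j) = f0app n ((x.1 : ℕ)+1) w (Fin.castSucc j) :=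
    congrFun hvw (Fin.castSucc j)
  rw [f0app_apply, f0app_apply] at h2
  have hlt : ((Fin.castSucc j : Fin (n+2)) : ℕ) < n+1 := by simpa using j.isLt
  rw [dif_pos hlt, dif_pos hlt] at h2
  simpa using h2

lemma g0_app_surjective (n : ℕ) (x : Fin (n+1) × Fin n) :
    Function.Surjective ((g0 n).app x).hom := by
  intro (t : ∀ i : Fin (n+1), ℂ ⧸ jsub n i x)
  have hre : ∀ i : Fin (n+1), ∃ c : ℂ, Submodule.Quotient.mk c = t i := fun i =>
    Submodule.Quotient.mk_surjective _ (t i)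
  choose r hr using hre
  refine ⟨fun k : Fin (n+2) => Fin.cases (motive := fun _ => ℂ) 0 r k, ?_⟩
  funext i
  show (jsub n i x).mkQ (Fin.cases (motive := fun _ => ℂ) 0 r i.succ) = t i
  rw [Fin.cases_succ]
  exact hr i

lemma g0_ker_sub (n : ℕ) (x : Fin (n+1) × Fin n) (u : Fin (n+2) → ℂ)
    (hu : ((g0 n).app x).hom u = 0) : ∃ v : (Mgrid n).obj x, ((f0 n).app x).hom v = u := by
  have hzero : ∀ i : Fin (n+1), x.1 ≤ i → u i.succ = 0 := by
    intro i hx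
    have h1 : (jsub n i x).mkQ (u i.succ) = 0 := congrFun hu i
    have h2 : u i.succ ∈ jsub n i x := (Submodule.Quotient.mk_eq_zero _).mp h1
    rw [jsub, if_pos hx] at h2
    simpa using h2
  set v' : Fin (n+1) → ℂ := fun j => u (Fin.castSucc j) with hv'
  have hmem : v' ∈ Fstd n ((x.1 : ℕ) + 1) := by
    refine mem_Fstd n _ v' fun j hj => ?_
    have hj1 : 1 ≤ (j : ℕ) := by omega
    set i : Fin (n+1) := ⟨(j : ℕ) - 1, by omega⟩ with hi
    have hxi : x.1 ≤ i := by
      rw [Fin.le_def]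
      show (x.1 : ℕ) ≤ (j : ℕ) - 1
      omega
    have heq : i.succ = Fin.castSucc j := by
      rw [Fin.ext_iff]
      show ((j : ℕ) - 1) + 1 = (j : ℕ)
      omega
    have := hzero i hxi
    rw [heq] at this
    exact this
  refine ⟨⟨v', hmem⟩, ?_⟩
  funext k
  show f0app n ((x.1 : ℕ) + 1) ⟨v', hmem⟩ k = u k
  rw [f0app_apply]
  by_cases h : (k : ℕ) < n+1
  · rw [dif_pos h]
    show u (Fin.castSucc ⟨(k : ℕ), h⟩) = u k
    exact congrArg u (Fin.ext rfl)
  · rw [dif_neg h]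
    have hk : k = (Fin.last n).succ := by
      rw [Fin.ext_iff]
      have := k.isLt
      show (k : ℕ) = n + 1
      omega
    rw [hk]
    exact (hzero (Fin.last n) (Fin.le_last _)).symm

lemma S0_shortExact (n : ℕ) : (ShortComplex.mk (f0 n) (g0 n) (w0 n)).ShortExact := by
  set S := ShortComplex.mk (f0 n) (g0 n) (w0 n) with hS
  have hmono : Mono S.f := by
    rw [NatTrans.mono_iff_mono_app]
    intro x
    rw [ModuleCat.mono_iff_injective]
    exact f0_app_injective n x
  have hepi : Epi S.g := by
    rw [NatTrans.epi_iff_epi_app]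
    intro x
    rw [ModuleCat.epi_iff_surjective]
    exact g0_app_surjective n x
  refine { exact := ?_, mono_f := hmono, epi_g := hepi }
  rw [ShortComplex.exact_iff_isZero_homology, Functor.isZero_iff]
  intro x
  let E := (evaluation (Fin (n+1) × Fin n) (ModuleCat ℂ)).obj x
  haveI : E.PreservesHomology := ⟨fun _ => inferInstance, fun _ => inferInstance⟩
  have hex : (S.map E).Exact := by
    rw [ShortComplex.moduleCat_exact_iff]
    intro u hu
    exact g0_ker_sub n x u hu
  rw [ShortComplex.exact_iff_isZero_homology] at hex
  exact IsZero.of_iso hex (S.mapHomologyIso E).symm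

lemma single_natural (n : ℕ) (i : Fin (n+1)) {x y : Fin (n+1) × Fin n}
    (h : ∀ i' : Fin (n+1), jsub n i' x ≤ (jsub n i' y).comap (LinearMap.id : ℂ →ₗ[ℂ] ℂ))
    (t : ℂ ⧸ jsub n i x) (i' : Fin (n+1)) :
    (Pi.single i (Submodule.mapQ (jsub n i x) (jsub n i y) LinearMap.id (h i) t) :
      ∀ i' : Fin (n+1), ℂ ⧸ jsub n i' y) i'
      = Submodule.mapQ (jsub n i' x) (jsub n i' y) LinearMap.id (h i')
        ((Pi.single i t : ∀ i' : Fin (n+1), ℂ ⧸ jsub n i' x) i') := by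
  by_cases hc : i' = i
  · subst hc
    rw [Pi.single_eq_same, Pi.single_eq_same]
  · rw [Pi.single_eq_of_ne hc, Pi.single_eq_of_ne hc]
    exact (map_zero _).symm

/-- `I₀` (the direct sum of `n+2` copies of the constant functor with value `ℂ`) and
`I₁ = ⨁_{i=0}^{n} J_i` are injective objects of the functor category, and there is a
short exact sequence `0 → M → I₀ → I₁ → 0`; in particular the injective dimension of `M`
is at most `1`. -/
theorem Mgrid_injective_resolution (n : ℕ) (hn : 2 ≤ n) :
    haveI : HasFiniteBiproducts ((Fin (n+1) × Fin n) ⥤ ModuleCat ℂ) :=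
      Abelian.hasFiniteBiproducts
    Injective (⨁ fun _ : Fin (n+2) => constC n) ∧
    Injective (⨁ fun i : Fin (n+1) => Jfun n i) ∧
    ∃ (f : Mgrid n ⟶ ⨁ fun _ : Fin (n+2) => constC n)
      (g : (⨁ fun _ : Fin (n+2) => constC n) ⟶ ⨁ fun i : Fin (n+1) => Jfun n i)
      (hw : f ≫ g = 0), (ShortComplex.mk f g hw).ShortExact := by
  haveI : HasFiniteBiproducts ((Fin (n+1) × Fin n) ⥤ ModuleCat ℂ) :=
    Abelian.hasFiniteBiproducts
  haveI hJ : ∀ i : Fin (n+1), Injective (Jfun n i) := fun i => Jfun_injective n (by omega) i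
  haveI hC : Injective (constC n) := constC_injective n (by omega)
  refine ⟨inferInstance, inferInstance, ?_⟩
  -- the isomorphism between `P0 n` and the biproduct of constant functors
  let prk : ∀ _ : Fin (n+2), P0 n ⟶ constC n := fun k =>
    { app := fun x => ModuleCat.ofHom (LinearMap.proj k : (Fin (n+2) → ℂ) →ₗ[ℂ] ℂ)
      naturality := fun {x y} a => ModuleCat.hom_ext (LinearMap.ext fun u => rfl) }
  let ink : ∀ _ : Fin (n+2), constC n ⟶ P0 n := fun k =>
    { app := fun x => ModuleCat.ofHom (LinearMap.single ℂ (fun _ : Fin (n+2) => ℂ) k)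
      naturality := fun {x y} a => ModuleCat.hom_ext (LinearMap.ext fun c => rfl) }
  let e0 : P0 n ≅ ⨁ (fun _ : Fin (n+2) => constC n) :=
    { hom := biproduct.lift prk
      inv := biproduct.desc ink
      hom_inv_id := by
        rw [biproduct.lift_desc]
        ext x u
        show ((∑ k : Fin (n+2), prk k ≫ ink k).app x).hom u = u
        rw [NatTrans.app_sum, ModuleCat.hom_sum]
        show (∑ k : Fin (n+2), ((prk k ≫ ink k).app x).hom) u = u
        rw [LinearMap.coe_sum, Finset.sum_apply]
        show (∑ k : Fin (n+2), Pi.single k ((show Fin (n+2) → ℂ from u) k)) = u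
        exact Finset.univ_sum_single u
      inv_hom_id := by
        apply biproduct.hom_ext
        intro k
        apply biproduct.hom_ext'
        intro j
        simp only [Category.assoc, biproduct.lift_π, biproduct.ι_desc_assoc,
          Category.id_comp]
        by_cases h : j = k
        · subst h
          rw [biproduct.ι_π_self]
          refine NatTrans.ext (funext fun x => ?_)
          refine ModuleCat.hom_ext (LinearMap.ext fun (c : ℂ) => ?_)
          show (Pi.single j (c : ℂ) : Fin (n+2) → ℂ) j = _
          rw [Pi.single_eq_same]
          rfl
        · rw [biproduct.ι_π_ne _ h]
          refine NatTrans.ext (funext fun x => ?_)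
          refine ModuleCat.hom_ext (LinearMap.ext fun c => ?_)
          show (Pi.single j (c : ℂ) : Fin (n+2) → ℂ) k = 0
          exact Pi.single_eq_of_ne (M := fun _ : Fin (n+2) => ℂ) (fun hkj => h hkj.symm) c }
  -- the isomorphism between `P1 n` and the biproduct of the `Jfun n i`
  let pr1 : ∀ i : Fin (n+1), P1 n ⟶ Jfun n i := fun i =>
    { app := fun x => ModuleCat.ofHom (LinearMap.proj i : (∀ i' : Fin (n+1), ℂ ⧸ jsub n i' x) →ₗ[ℂ] _)
      naturality := fun {x y} a => ModuleCat.hom_ext (LinearMap.ext fun t => rfl) }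
  let in1 : ∀ i : Fin (n+1), Jfun n i ⟶ P1 n := fun i =>
    { app := fun x => ModuleCat.ofHom (LinearMap.single ℂ (fun i' : Fin (n+1) => ℂ ⧸ jsub n i' x) i)
      naturality := fun {x y} a => ModuleCat.hom_ext (LinearMap.ext fun t => funext fun i' =>
        single_natural n i
          (fun i' => by rw [Submodule.comap_id]; exact jsub_mono n i' (leOfHom a.1)) t i') }
  let e1 : P1 n ≅ ⨁ (fun i : Fin (n+1) => Jfun n i) :=
    { hom := biproduct.lift pr1
      inv := biproduct.desc in1
      hom_inv_id := by
        rw [biproduct.lift_desc]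
        ext x t
        show ((∑ i : Fin (n+1), pr1 i ≫ in1 i).app x).hom t = t
        rw [NatTrans.app_sum, ModuleCat.hom_sum]
        show (∑ i : Fin (n+1), ((pr1 i ≫ in1 i).app x).hom) t = t
        rw [LinearMap.coe_sum, Finset.sum_apply]
        show (∑ i : Fin (n+1), Pi.single i ((show ∀ i' : Fin (n+1), ℂ ⧸ jsub n i' x from t) i)) = t
        exact Finset.univ_sum_single t
      inv_hom_id := by
        apply biproduct.hom_ext
        intro k
        apply biproduct.hom_ext'
        intro j
        simp only [Category.assoc, biproduct.lift_π, biproduct.ι_desc_assoc,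
          Category.id_comp]
        by_cases h : j = k
        · subst h
          rw [biproduct.ι_π_self]
          refine NatTrans.ext (funext fun x => ?_)
          refine ModuleCat.hom_ext (LinearMap.ext fun (c : ℂ ⧸ jsub n j x) => ?_)
          show (Pi.single j c : ∀ i' : Fin (n+1), ℂ ⧸ jsub n i' x) j = _
          rw [Pi.single_eq_same]
          rfl
        · rw [biproduct.ι_π_ne _ h]
          refine NatTrans.ext (funext fun x => ?_)
          refine ModuleCat.hom_ext (LinearMap.ext fun c => ?_)
          show (Pi.single j c : ∀ i' : Fin (n+1), ℂ ⧸ jsub n i' x) k = 0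
          exact Pi.single_eq_of_ne (M := fun i' : Fin (n+1) => ℂ ⧸ jsub n i' x)
            (fun hkj => h hkj.symm) (c : ℂ ⧸ jsub n j x) }
  refine ⟨f0 n ≫ e0.hom, e0.inv ≫ g0 n ≫ e1.hom, ?_, ?_⟩
  · rw [Category.assoc, e0.hom_inv_id_assoc, ← Category.assoc, w0, zero_comp]
  · refine ShortComplex.shortExact_of_iso
      (ShortComplex.isoMk (Iso.refl (Mgrid n)) e0 e1 ?_ ?_ :
        ShortComplex.mk (f0 n) (g0 n) (w0 n) ≅ _) (S0_shortExact n)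
    · rw [Iso.refl_hom, Category.id_comp]
    · exact e0.hom_inv_id_assoc (g0 n ≫ e1.hom)
end
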